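/- arXiv:q-bio/0508012 — 8 statements merged into one kernel-verified Lean document; each statement's English description precedes it below -/
import Mathlib

section
/- Let M be an SNP matrix with MEC(M) = d, let M' be obtained from M (of dimensions n×m) by making m+1 copies of every row, and let r ∈ {0,1}^m. Then MEC(M' ∪ {r}) = (m+1)d + min over (H₁,H₂) ∈ OptPairs(M) of min(d(r,H₁), d(r,H₂)). -/
open Finset

/-- A row of an SNP matrix: entries in {0,1,-} (`none` is a hole). -/
abbrev Row (m : ℕ) := Fin m → Option Bool

/-- A haplotype: a hole-free binary string. -/
abbrev Hap (m : ℕ) := Fin m → Bool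

/-- `dist r H`: the number of positions where `r` has a non-hole value differing from `H`. -/
def dist {m : ℕ} (r : Row m) (H : Hap m) : ℕ :=
  (univ.filter (fun j => r j ≠ none ∧ r j ≠ some (H j))).card

/-- `DM M H₁ H₂ = Σ over rows r of M of min(d(r,H₁), d(r,H₂))`. -/
def DM {m : ℕ} (M : Multiset (Row m)) (H1 H2 : Hap m) : ℕ :=
  (M.map (fun r => min (dist r H1) (dist r H2))).sum

/-- MEC(M): the minimum of `DM M H₁ H₂` over all haplotype pairs. -/
noncomputable def MEC {m : ℕ} (M : Multiset (Row m)) : ℕ :=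
  sInf {v : ℕ | ∃ H1 H2 : Hap m, DM M H1 H2 = v}

/-- The set of optimal haplotype pairs for `M`. -/
def OptPairs {m : ℕ} (M : Multiset (Row m)) : Set (Hap m × Hap m) :=
  {p | DM M p.1 p.2 = MEC M}

/- Each of the `n ≥ m` copies of `M` charges every non-optimal pair at least one more error than
an optimal one, while the extra row costs at most `m`; so optimal pairs of the enlarged matrix are
optimal pairs of `M`, and among those the extra row picks the one it fits best. -/

section

variable {m : ℕ}

lemma dist_le (r : Row m) (H : Hap m) : dist r H ≤ m :=
  (card_filter_le _ _).trans_eq (card_fin m)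

lemma DM_cons (r : Row m) (M : Multiset (Row m)) (H1 H2 : Hap m) :
    DM (r ::ₘ M) H1 H2 = min (dist r H1) (dist r H2) + DM M H1 H2 := by
  simp [DM]

lemma DM_nsmul (n : ℕ) (M : Multiset (Row m)) (H1 H2 : Hap m) :
    DM (n • M) H1 H2 = n * DM M H1 H2 := by
  simp [DM, Multiset.map_nsmul, Multiset.sum_nsmul]

lemma MEC_le_DM (M : Multiset (Row m)) (H1 H2 : Hap m) : MEC M ≤ DM M H1 H2 :=
  Nat.sInf_le ⟨H1, H2, rfl⟩

lemma exists_DM_eq_MEC (M : Multiset (Row m)) : ∃ H1 H2 : Hap m, DM M H1 H2 = MEC M :=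
  Nat.sInf_mem (s := {v | ∃ H1 H2 : Hap m, DM M H1 H2 = v})
    ⟨_, fun _ => false, fun _ => false, rfl⟩

lemma le_MEC {M : Multiset (Row m)} {a : ℕ} (h : ∀ H1 H2, a ≤ DM M H1 H2) :
    a ≤ MEC M := by
  obtain ⟨H1, H2, hH⟩ := exists_DM_eq_MEC M
  exact hH ▸ h H1 H2

lemma MEC_cons_nsmul (M : Multiset (Row m)) (s : Row m) {n : ℕ} (hn : m ≤ n) :
    MEC (s ::ₘ n • M) = n * MEC M +
      sInf {v : ℕ | ∃ p ∈ OptPairs M, min (dist s p.1) (dist s p.2) = v} := by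
  set T := {v : ℕ | ∃ p ∈ OptPairs M, min (dist s p.1) (dist s p.2) = v}
  obtain ⟨H1, H2, hopt⟩ := exists_DM_eq_MEC M
  obtain ⟨p, hp, hpT⟩ : sInf T ∈ T := Nat.sInf_mem ⟨_, (H1, H2), hopt, rfl⟩
  have hp' : DM M p.1 p.2 = MEC M := hp
  apply le_antisymm
  · calc MEC (s ::ₘ n • M) ≤ DM (s ::ₘ n • M) p.1 p.2 := MEC_le_DM _ _ _
      _ = n * MEC M + sInf T := by rw [DM_cons, DM_nsmul, hp', hpT, add_comm]
  · refine le_MEC fun G1 G2 => ?_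
    rw [DM_cons, DM_nsmul]
    rcases (MEC_le_DM M G1 G2).eq_or_lt with hG | hG
    · have hfit : sInf T ≤ min (dist s G1) (dist s G2) := Nat.sInf_le ⟨(G1, G2), hG.symm, rfl⟩
      rw [← hG]
      omega
    · have hT_le : sInf T ≤ m := hpT ▸ (min_le_left _ _).trans (dist_le _ _)
      have hcopies : n * (MEC M + 1) ≤ n * DM M G1 G2 := Nat.mul_le_mul_left _ hG
      rw [mul_add_one] at hcopies
      omega

end

/-- DFN correctness: if MEC(M) = d and M' is obtained from the n×m matrix M by making
m+1 copies of every row, then for any r ∈ {0,1}^m,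
`MEC(M' ∪ {r}) = (m+1)d + min over (H₁,H₂) ∈ OptPairs(M) of min(d(r,H₁), d(r,H₂))`. -/
theorem MEC_replicate_add_row {m : ℕ} (M : Multiset (Row m)) (d : ℕ)
    (hd : MEC M = d) (r : Hap m) :
    MEC ((fun j => some (r j)) ::ₘ (m + 1) • M)
      = (m + 1) * d +
        sInf {v : ℕ | ∃ p ∈ OptPairs M,
          min (dist (fun j => some (r j)) p.1) (dist (fun j => some (r j)) p.2) = v} :=
  hd ▸ MEC_cons_nsmul M _ m.le_succ
end

section
/- Let I_n be the n×n identity matrix viewed as a hole-free SNP matrix, and let 2 ≤ k < n-2. Then the minimum of D_{I_n,k}(H₁,...,H_k) over all k-tuples of haplotypes in {0,1}^n equals n-(k-1). -/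
/-!
Let `S` be the set of rows `e_j` that occur among the haplotypes; these rows cost `0`, and
`#S ≤ k`. Every other row costs at least `1`, which gives `n - (k - 1)` as soon as `#S < k`.
If `#S = k`, every haplotype is a unit vector, so every other row is at distance `2` from all
of them, and the cost is at least `2 (n - k) ≥ n - (k - 1)` because `k < n`. The bound is
attained by the zero haplotype together with `e_0, …, e_{k-2}`.
-/

open Finset

/-- Hamming distance between binary strings. -/
def hamming {n : ℕ} (r H : Fin n → Bool) : ℕ :=
  (univ.filter (fun j => r j ≠ H j)).card

/-- The n×n identity matrix viewed as a hole-free SNP matrix: its rows are the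
standard basis vectors e₁,...,e_n. -/
def IdentM (n : ℕ) : Multiset (Fin n → Bool) :=
  Finset.univ.val.map (fun i j => decide (j = i))

/-- `D_{M,k}(H₁,...,H_k) = Σ over rows r of M of min_i d(r,H_i)` (Hamming distance). -/
noncomputable def Dk {n k : ℕ} (M : Multiset (Fin n → Bool)) (H : Fin k → Fin n → Bool) : ℕ :=
  (M.map (fun r => sInf {t : ℕ | ∃ i : Fin k, hamming r (H i) = t})).sum

def unitVec {n : ℕ} (i : Fin n) : Fin n → Bool := fun j => decide (j = i)

lemma unitVec_injective {n : ℕ} : Function.Injective (unitVec (n := n)) := fun j m h => by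
  simpa [unitVec] using congrFun h j

lemma hamming_eq_zero_iff {n : ℕ} {r H : Fin n → Bool} : hamming r H = 0 ↔ r = H := by
  simp [hamming, filter_eq_empty_iff, funext_iff]

lemma hamming_unitVec_false {n : ℕ} (j : Fin n) : hamming (unitVec j) (fun _ => false) = 1 := by
  simp [hamming, unitVec, filter_eq']

lemma hamming_unitVec_unitVec {n : ℕ} {j m : Fin n} (h : j ≠ m) :
    hamming (unitVec j) (unitVec m) = 2 := by
  have : univ.filter (fun x => unitVec j x ≠ unitVec m x) = {j, m} := by
    ext x
    by_cases hj : x = j <;> by_cases hm : x = m <;> simp_all [unitVec]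
  rw [hamming, this, card_pair h]

lemma Dk_IdentM {n k : ℕ} (H : Fin k → Fin n → Bool) :
    Dk (IdentM n) H = ∑ j, ⨅ i, hamming (unitVec j) (H i) := by
  rw [Dk, IdentM, Multiset.map_map]; rfl

lemma mul_card_compl_le_sum {α : Type*} [Fintype α] [DecidableEq α] {c : ℕ} (f : α → ℕ)
    (S : Finset α) (h : ∀ a ∉ S, c ≤ f a) : c * (Fintype.card α - #S) ≤ ∑ a, f a := by
  calc c * (Fintype.card α - #S) = #Sᶜ • c := by rw [card_compl, smul_eq_mul, mul_comm]
    _ ≤ ∑ a ∈ Sᶜ, f a := card_nsmul_le_sum _ _ _ fun a ha => h a (mem_compl.mp ha)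
    _ ≤ ∑ a, f a := sum_le_sum_of_subset (subset_univ _)

section LowerBound

variable {n k : ℕ} (H : Fin k → Fin n → Bool)

lemma map_filter_unitVec_subset_image :
    ({j | ∃ i, H i = unitVec j} : Finset _).map ⟨unitVec, unitVec_injective⟩ ⊆ univ.image H := by
  intro r hr
  obtain ⟨j, hj, rfl⟩ := mem_map.mp hr
  obtain ⟨i, hi⟩ := (mem_filter.mp hj).2
  exact mem_image.mpr ⟨i, mem_univ i, hi⟩

lemma card_filter_unitVec_le : #{j | ∃ i, H i = unitVec j} ≤ k := by
  simpa using (card_le_card (map_filter_unitVec_subset_image H)).trans card_image_le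

lemma exists_eq_unitVec_of_card_filter_eq (hS : #{j | ∃ i, H i = unitVec j} = k) (i : Fin k) :
    ∃ m, H i = unitVec m := by
  have hmap := eq_of_subset_of_card_le (map_filter_unitVec_subset_image H)
    (by simpa [hS] using card_image_le (s := univ) (f := H))
  obtain ⟨m, -, hm⟩ := mem_map.mp (hmap ▸ mem_image_of_mem H (mem_univ i))
  exact ⟨m, hm.symm⟩

variable [NeZero k]

lemma one_le_iInf_hamming {r : Fin n → Bool} (hr : ∀ i, H i ≠ r) : 1 ≤ ⨅ i, hamming r (H i) :=
  le_ciInf fun i => Nat.one_le_iff_ne_zero.mpr fun h => hr i (hamming_eq_zero_iff.mp h).symm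

lemma two_le_iInf_hamming {j : Fin n} (hj : ∀ i, H i ≠ unitVec j)
    (hH : ∀ i, ∃ m, H i = unitVec m) : 2 ≤ ⨅ i, hamming (unitVec j) (H i) :=
  le_ciInf fun i => by
    obtain ⟨m, hm⟩ := hH i
    rw [hm, hamming_unitVec_unitVec]
    rintro rfl
    exact hj i hm

lemma le_Dk_IdentM (hkn : k < n) : n - (k - 1) ≤ Dk (IdentM n) H := by
  set S : Finset (Fin n) := {j | ∃ i, H i = unitVec j}
  have hS : #S ≤ k := card_filter_unitVec_le H
  have hnotMem : ∀ j ∉ S, ∀ i, H i ≠ unitVec j := fun j hj i hi =>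
    hj (mem_filter.mpr ⟨mem_univ j, i, hi⟩)
  rw [Dk_IdentM]
  rcases hS.lt_or_eq with hlt | heq
  · have := mul_card_compl_le_sum _ S fun j hj => one_le_iInf_hamming H (hnotMem j hj)
    rw [Fintype.card_fin] at this
    omega
  · have := mul_card_compl_le_sum _ S fun j hj =>
      two_le_iInf_hamming H (hnotMem j hj) (exists_eq_unitVec_of_card_filter_eq H heq)
    rw [Fintype.card_fin] at this
    omega

end LowerBound

lemma exists_Dk_IdentM_le {n k : ℕ} (hk : 1 ≤ k) (hkn : k ≤ n) :
    ∃ H : Fin k → Fin n → Bool, Dk (IdentM n) H ≤ n - (k - 1) := by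
  obtain ⟨k, rfl⟩ : ∃ k', k = k' + 1 := ⟨k - 1, by omega⟩
  refine ⟨Fin.cons (fun _ => false) fun i => unitVec (Fin.castLE (by omega) i), ?_⟩
  set a : Fin n := ⟨k, by omega⟩
  calc Dk (IdentM n) _ ≤ ∑ j, if a ≤ j then 1 else 0 := by
        rw [Dk_IdentM]
        refine sum_le_sum fun j _ => ?_
        split_ifs with hj
        · exact (ciInf_le' _ 0).trans_eq (by simp [hamming_unitVec_false])
        · refine (ciInf_le' _ (Fin.succ ⟨j, by simpa [a, Fin.le_def] using hj⟩)).trans_eq ?_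
          rw [Fin.cons_succ, hamming_eq_zero_iff]
          rfl
    _ = n - (k + 1 - 1) := by rw [sum_boole, filter_le_eq_Ici, Fin.card_Ici]; simp [a]

/-- For 2 ≤ k < n-2, the minimum of `D_{Iₙ,k}` over all k-tuples of haplotypes
equals n - (k-1). -/
theorem Dk_identity_min (n k : ℕ) (hk2 : 2 ≤ k) (hkn : k < n - 2) :
    sInf {v : ℕ | ∃ H : Fin k → Fin n → Bool, Dk (IdentM n) H = v} = n - (k - 1) := by
  have : NeZero k := ⟨by omega⟩
  obtain ⟨H₀, hH₀⟩ := exists_Dk_IdentM_le (n := n) (k := k) (by omega) (by omega)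
  refine le_antisymm (le_trans (Nat.sInf_le ⟨H₀, rfl⟩) hH₀) (le_csInf ⟨_, H₀, rfl⟩ ?_)
  rintro v ⟨H, rfl⟩
  exact le_Dk_IdentM H (by omega)
end

section
/- Let G=(V,E) be a graph and let M be the |E|×|V| SNP matrix whose row for edge {i,j} (with respect to some orientation putting i as tail and j as head) has a 0 in column i, a 1 in column j, and holes elsewhere. Then M can be made feasible with at most k flips if and only if G can be made bipartite by removing at most k edges, provided every column of M contains either one 1 and two 0s or two 1s and one 0 (which holds when G is 3-regular and oriented so each vertex is in-in-out or out-out-in). -/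
open Finset

/-- The row of the MEC matrix encoding the oriented edge `p = (tail, head)`:
a 0 in the tail column, a 1 in the head column, holes elsewhere. -/
def edgeRow {V : Type*} [DecidableEq V] (p : V × V) : V → Option Bool :=
  fun j => if j = p.1 then some false else if j = p.2 then some true else none

private theorem mec_forward {V : Type*} [Fintype V] [DecidableEq V]
    (G : SimpleGraph V) [DecidableRel G.Adj]
    (D : Finset (V × V))
    (hD : ∀ p ∈ D, G.Adj p.1 p.2)
    (hcover : ∀ u v : V, G.Adj u v → ((u, v) ∈ D ↔ (v, u) ∉ D))
    (hcolumns : ∀ v : V,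
      ((D.filter (fun p => p.2 = v)).card = 1 ∧ (D.filter (fun p => p.1 = v)).card = 2) ∨
      ((D.filter (fun p => p.2 = v)).card = 2 ∧ (D.filter (fun p => p.1 = v)).card = 1))
    (k : ℕ)
    (N : V × V → V → Option Bool)
    (hhole : ∀ p ∈ D, ∀ j, (N p j = none ↔ edgeRow p j = none))
    (hcost : (∑ p ∈ D, (univ.filter (fun j => N p j ≠ edgeRow p j)).card) ≤ k)
    (H1 H2 : V → Bool)
    (hfit : ∀ p ∈ D,
      (∀ j b, N p j = some b → b = H1 j) ∨ (∀ j b, N p j = some b → b = H2 j)) :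
    (∃ E' : Finset (Sym2 V), ↑E' ⊆ G.edgeSet ∧ E'.card ≤ k ∧
        (G.deleteEdges ↑E').Colorable 2) := by
  classical
  -- select, for each row, which haplotype explains it
  obtain ⟨a, ha⟩ : ∃ a : V × V → Bool,
      ∀ p ∈ D, ∀ j b, N p j = some b → b = (if a p = true then H1 j else H2 j) := by
    refine ⟨fun p => if (∀ j b, N p j = some b → b = H1 j) then true else false, ?_⟩
    intro p hp j b hb
    show b = if (if (∀ j b, N p j = some b → b = H1 j) then true else false) = true
      then H1 j else H2 j
    by_cases hP : (∀ j b, N p j = some b → b = H1 j)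
    · rw [if_pos hP]
      simpa using hP j b hb
    · rw [if_neg hP]
      simpa using ((hfit p hp).resolve_left hP) j b hb
  obtain ⟨Hp, hHpval⟩ : ∃ Hp : V × V → V → Bool,
      ∀ p j, Hp p j = if a p = true then H1 j else H2 j := ⟨_, fun _ _ => rfl⟩
  have ha : ∀ p ∈ D, ∀ j b, N p j = some b → b = Hp p j := by
    intro p hp j b hb
    rw [hHpval]
    exact ha p hp j b hb
  have hne : ∀ p ∈ D, p.1 ≠ p.2 := fun p hp => (hD p hp).ne
  have hN1 : ∀ p ∈ D, N p p.1 = some (Hp p p.1) := by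
    intro p hp
    cases hN : N p p.1 with
    | none =>
        have := (hhole p hp p.1).mp hN
        unfold edgeRow at this
        rw [if_pos rfl] at this
        exact absurd this (by simp)
    | some b => rw [ha p hp p.1 b hN]
  have hN2 : ∀ p ∈ D, N p p.2 = some (Hp p p.2) := by
    intro p hp
    cases hN : N p p.2 with
    | none =>
        have := (hhole p hp p.2).mp hN
        unfold edgeRow at this
        rw [if_neg (Ne.symm (hne p hp)), if_pos rfl] at this
        exact absurd this (by simp)
    | some b => rw [ha p hp p.2 b hN]
  have hNnone : ∀ p ∈ D, ∀ j, j ≠ p.1 → j ≠ p.2 → N p j = none := by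
    intro p hp j h1 h2
    refine (hhole p hp j).mpr ?_
    unfold edgeRow
    rw [if_neg h1, if_neg h2]
  have hE1 : ∀ p : V × V, edgeRow p p.1 = some false := by
    intro p; unfold edgeRow; rw [if_pos rfl]
  have hE2 : ∀ p ∈ D, edgeRow p p.2 = some true := by
    intro p hp; unfold edgeRow; rw [if_neg (Ne.symm (hne p hp)), if_pos rfl]
  -- row-wise flip count
  have hrow : ∀ p ∈ D, (univ.filter (fun j => N p j ≠ edgeRow p j)).card
      = (if Hp p p.1 = true then 1 else 0) + (if Hp p p.2 = true then 0 else 1) := by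
    intro p hp
    have hne' := hne p hp
    cases hb1 : Hp p p.1 <;> cases hb2 : Hp p p.2
    · -- (false, false) : flip at p.2 only
      have hset : (univ.filter (fun j => N p j ≠ edgeRow p j)) = {p.2} := by
        ext j
        simp only [mem_filter, mem_univ, true_and, mem_singleton]
        by_cases h1 : j = p.1
        · subst h1
          rw [hN1 p hp, hE1, hb1]
          simp [hne']
        · by_cases h2 : j = p.2
          · subst h2
            rw [hN2 p hp, hE2 p hp, hb2]
            simp
          · rw [hNnone p hp j h1 h2]
            unfold edgeRow
            rw [if_neg h1, if_neg h2]
            simp [h2]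
      rw [hset]; simp
    · -- (false, true) : no flips
      have hset : (univ.filter (fun j => N p j ≠ edgeRow p j)) = ∅ := by
        rw [filter_eq_empty_iff]
        intro j _
        simp only [ne_eq, not_not]
        by_cases h1 : j = p.1
        · subst h1; rw [hN1 p hp, hE1, hb1]
        · by_cases h2 : j = p.2
          · subst h2; rw [hN2 p hp, hE2 p hp, hb2]
          · rw [hNnone p hp j h1 h2]
            unfold edgeRow
            rw [if_neg h1, if_neg h2]
      rw [hset]; simp
    · -- (true, false) : two flips
      have hset : (univ.filter (fun j => N p j ≠ edgeRow p j)) = {p.1, p.2} := by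
        ext j
        simp only [mem_filter, mem_univ, true_and, mem_insert, mem_singleton]
        by_cases h1 : j = p.1
        · subst h1
          rw [hN1 p hp, hE1, hb1]
          simp
        · by_cases h2 : j = p.2
          · subst h2
            rw [hN2 p hp, hE2 p hp, hb2]
            simp [h1]
          · rw [hNnone p hp j h1 h2]
            unfold edgeRow
            rw [if_neg h1, if_neg h2]
            simp [h1, h2]
      rw [hset, card_pair hne']
      simp
    · -- (true, true) : flip at p.1 only
      have hset : (univ.filter (fun j => N p j ≠ edgeRow p j)) = {p.1} := by
        ext j
        simp only [mem_filter, mem_univ, true_and, mem_singleton]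
        by_cases h1 : j = p.1
        · subst h1
          rw [hN1 p hp, hE1, hb1]
          simp
        · by_cases h2 : j = p.2
          · subst h2
            rw [hN2 p hp, hE2 p hp, hb2]
            simp [Ne.symm hne']
          · rw [hNnone p hp j h1 h2]
            unfold edgeRow
            rw [if_neg h1, if_neg h2]
            simp [h1]
      rw [hset]; simp
  -- generic column-splitting of a row-sum
  have hsplit : ∀ g h : V × V → V → ℕ,
      ∑ p ∈ D, (g p p.1 + h p p.2)
      = ∑ v ∈ univ, ((∑ p ∈ D.filter (fun p => p.1 = v), g p v)
          + (∑ p ∈ D.filter (fun p => p.2 = v), h p v)) := by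
    intro g h
    rw [Finset.sum_add_distrib, Finset.sum_add_distrib]
    congr 1
    · rw [← Finset.sum_fiberwise_of_maps_to (fun p (_ : p ∈ D) => mem_univ p.1)
        (fun p => g p p.1)]
      exact Finset.sum_congr rfl fun v _ => Finset.sum_congr rfl
        fun p hp => by rw [(mem_filter.mp hp).2]
    · rw [← Finset.sum_fiberwise_of_maps_to (fun p (_ : p ∈ D) => mem_univ p.2)
        (fun p => h p p.2)]
      exact Finset.sum_congr rfl fun v _ => Finset.sum_congr rfl
        fun p hp => by rw [(mem_filter.mp hp).2]
  -- the new column values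
  obtain ⟨nt, hntdef⟩ : ∃ nt : V → Bool → ℕ, ∀ v x, nt v x =
      (∑ p ∈ D.filter (fun p => p.1 = v), if (x == a p) = true then 1 else 0)
      + (∑ p ∈ D.filter (fun p => p.2 = v), if (x == a p) = true then 0 else 1) :=
    ⟨_, fun _ _ => rfl⟩
  obtain ⟨c, hcdef⟩ : ∃ c : V → Bool, ∀ v, c v =
      if H1 v = H2 v then (if nt v true ≤ 1 then true else false) else H1 v :=
    ⟨_, fun _ => rfl⟩
  have hnt3 : ∀ v, nt v true + nt v false = 3 := by
    intro v
    have e1 : ∀ p : V × V, ((if ((true : Bool) == a p) = true then 1 else 0) : ℕ)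
        + (if ((false : Bool) == a p) = true then 1 else 0) = 1 := by
      intro p; cases a p <;> simp
    have e2 : ∀ p : V × V, ((if ((true : Bool) == a p) = true then 0 else 1) : ℕ)
        + (if ((false : Bool) == a p) = true then 0 else 1) = 1 := by
      intro p; cases a p <;> simp
    have : nt v true + nt v false
        = (∑ p ∈ D.filter (fun p => p.1 = v),
            ((if ((true : Bool) == a p) = true then 1 else 0)
              + (if ((false : Bool) == a p) = true then 1 else 0)))
          + (∑ p ∈ D.filter (fun p => p.2 = v),
            ((if ((true : Bool) == a p) = true then 0 else 1)
              + (if ((false : Bool) == a p) = true then 0 else 1))) := by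
      rw [hntdef, hntdef]
      rw [Finset.sum_add_distrib, Finset.sum_add_distrib]
      ring
    rw [this]
    rw [Finset.sum_congr rfl fun p _ => e1 p, Finset.sum_congr rfl fun p _ => e2 p]
    simp only [Finset.sum_const, smul_eq_mul, mul_one]
    rcases hcolumns v with ⟨h1, h2⟩ | ⟨h1, h2⟩ <;> omega
  -- key per-column inequality
  have hkey : ∀ v, nt v (c v)
      ≤ (∑ p ∈ D.filter (fun p => p.1 = v), if Hp p v = true then 1 else 0)
        + (∑ p ∈ D.filter (fun p => p.2 = v), if Hp p v = true then 0 else 1) := by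
    intro v
    by_cases hv : H1 v = H2 v
    · -- old cost at column v is at least 1, new is at most 1
      have hHpv : ∀ p : V × V, Hp p v = H1 v := by
        intro p
        rw [hHpval]
        cases a p
        · simpa using hv.symm
        · simp
      have hold : 1 ≤ (∑ p ∈ D.filter (fun p => p.1 = v), if Hp p v = true then 1 else 0)
          + (∑ p ∈ D.filter (fun p => p.2 = v), if Hp p v = true then 0 else 1) := by
        cases hb : H1 v
        · have : (∑ p ∈ D.filter (fun p => p.2 = v), if Hp p v = true then 0 else 1)
              = (D.filter (fun p => p.2 = v)).card := by
            rw [Finset.sum_congr rfl fun p _ => by rw [hHpv, hb]]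
            simp
          have hcard : 1 ≤ (D.filter (fun p => p.2 = v)).card := by
            rcases hcolumns v with ⟨h1, _⟩ | ⟨h1, _⟩ <;> omega
          omega
        · have : (∑ p ∈ D.filter (fun p => p.1 = v), if Hp p v = true then 1 else 0)
              = (D.filter (fun p => p.1 = v)).card := by
            rw [Finset.sum_congr rfl fun p _ => by rw [hHpv, hb]]
            simp
          have hcard : 1 ≤ (D.filter (fun p => p.1 = v)).card := by
            rcases hcolumns v with ⟨_, h2⟩ | ⟨_, h2⟩ <;> omega
          omega
      have hnew : nt v (c v) ≤ 1 := by
        have hcv : c v = if nt v true ≤ 1 then true else false := by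
          rw [hcdef v, if_pos hv]
        by_cases h1 : nt v true ≤ 1
        · rw [hcv, if_pos h1]; exact h1
        · rw [hcv, if_neg h1]
          have := hnt3 v
          omega
      omega
    · -- old and new column costs coincide
      have hcv : c v = H1 v := by
        rw [hcdef v, if_neg hv]
      have hterm : ∀ p : V × V, ((c v) == a p) = Hp p v := by
        intro p
        rw [hcv, hHpval]
        cases ha' : a p
        · simp only [if_neg (by simp : ¬(false = true))]
          cases h1 : H1 v
          · have h2 : H2 v = true := by
              cases h2 : H2 v
              · exact absurd (h1.trans h2.symm) hv
              · rfl
            rw [h2]; rfl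
          · have h2 : H2 v = false := by
              cases h2 : H2 v
              · rfl
              · exact absurd (h1.trans h2.symm) hv
            rw [h2]; rfl
        · simp only [if_pos rfl]
          cases H1 v <;> rfl
      apply le_of_eq
      rw [hntdef]
      congr 1
      · exact Finset.sum_congr rfl fun p _ => by rw [hterm]
      · exact Finset.sum_congr rfl fun p _ => by rw [hterm]
  -- total new cost is at most k
  have main : ∑ p ∈ D, ((if (c p.1 == a p) = true then 1 else 0)
      + (if (c p.2 == a p) = true then 0 else 1)) ≤ k := by
    calc ∑ p ∈ D, ((if (c p.1 == a p) = true then 1 else 0)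
          + (if (c p.2 == a p) = true then 0 else 1))
        = ∑ v ∈ univ, ((∑ p ∈ D.filter (fun p => p.1 = v), if (c v == a p) = true then 1 else 0)
          + (∑ p ∈ D.filter (fun p => p.2 = v), if (c v == a p) = true then 0 else 1)) :=
          hsplit (fun p v => if (c v == a p) = true then 1 else 0)
            (fun p v => if (c v == a p) = true then 0 else 1)
      _ = ∑ v ∈ univ, nt v (c v) :=
          (Finset.sum_congr rfl fun v _ => (hntdef v (c v)).symm)
      _ ≤ ∑ v ∈ univ, ((∑ p ∈ D.filter (fun p => p.1 = v), if Hp p v = true then 1 else 0)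
          + (∑ p ∈ D.filter (fun p => p.2 = v), if Hp p v = true then 0 else 1)) :=
          Finset.sum_le_sum fun v _ => hkey v
      _ = ∑ p ∈ D, ((if Hp p p.1 = true then 1 else 0) + (if Hp p p.2 = true then 0 else 1)) :=
          (hsplit (fun p v => if Hp p v = true then 1 else 0)
            (fun p v => if Hp p v = true then 0 else 1)).symm
      _ = ∑ p ∈ D, (univ.filter (fun j => N p j ≠ edgeRow p j)).card :=
          (Finset.sum_congr rfl hrow).symm
      _ ≤ k := hcost
  -- the edge set to delete
  set E' : Finset (Sym2 V) :=
    (D.filter (fun p => ¬((c p.1 == a p) = false ∧ (c p.2 == a p) = true))).image Sym2.mk.uncurry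
    with hE'def
  refine ⟨E', ?_, ?_, ?_⟩
  · intro e he
    rw [mem_coe, hE'def, mem_image] at he
    obtain ⟨p, hp, rfl⟩ := he
    have : Sym2.mk.uncurry p = s(p.1, p.2) := rfl
    rw [this, SimpleGraph.mem_edgeSet]
    exact hD p (mem_filter.mp hp).1
  · calc E'.card ≤ (D.filter (fun p => ¬((c p.1 == a p) = false ∧ (c p.2 == a p) = true))).card :=
          Finset.card_image_le
      _ = ∑ p ∈ D.filter (fun p => ¬((c p.1 == a p) = false ∧ (c p.2 == a p) = true)), 1 := by
          simp
      _ ≤ ∑ p ∈ D.filter (fun p => ¬((c p.1 == a p) = false ∧ (c p.2 == a p) = true)),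
            ((if (c p.1 == a p) = true then 1 else 0) + (if (c p.2 == a p) = true then 0 else 1)) := by
          apply Finset.sum_le_sum
          intro p hp
          have hbad := (mem_filter.mp hp).2
          cases hx : (c p.1 == a p) <;> cases hy : (c p.2 == a p) <;>
            simp only [hx, hy] at hbad ⊢
          · simp
          · simp at hbad
          · simp
          · simp
      _ ≤ ∑ p ∈ D, ((if (c p.1 == a p) = true then 1 else 0)
            + (if (c p.2 == a p) = true then 0 else 1)) :=
          Finset.sum_le_sum_of_subset (filter_subset _ _)
      _ ≤ k := main
  · -- 2-colorability
    have hgood : ∀ p ∈ D, ∀ u w : V, Sym2.mk.uncurry p = s(u, w) → s(u, w) ∉ (E' : Set (Sym2 V)) →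
        ((c p.1 == a p) = false ∧ (c p.2 == a p) = true) := by
      intro p hp u w heq hnot
      by_contra hbad
      apply hnot
      rw [← heq]
      exact mem_coe.mpr (mem_image_of_mem _ (mem_filter.mpr ⟨hp, hbad⟩))
    have hcol : ∀ u w : V, (G.deleteEdges ↑E').Adj u w → c u ≠ c w := by
      intro u w hadj
      rw [SimpleGraph.deleteEdges_adj] at hadj
      obtain ⟨hGadj, hnot⟩ := hadj
      by_cases hmem : (u, w) ∈ D
      · obtain ⟨h1, h2⟩ := hgood (u, w) hmem u w rfl hnot
        intro hc
        rw [hc] at h1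
        rw [h2] at h1
        exact absurd h1 (by simp)
      · have hmem' : (w, u) ∈ D := by
          by_contra h
          exact hmem ((hcover u w hGadj).mpr h)
        obtain ⟨h1, h2⟩ := hgood (w, u) hmem' u w (Sym2.eq_swap) hnot
        intro hc
        rw [hc] at h2
        rw [h2] at h1
        exact absurd h1 (by simp)
    have hC : (G.deleteEdges ↑E').Coloring (Fin 2) :=
      SimpleGraph.Coloring.mk (fun v => if c v = true then 0 else 1) (by
        intro u w hadj
        have hne2 := hcol u w hadj
        show (if c u = true then (0 : Fin 2) else 1) ≠ (if c w = true then (0 : Fin 2) else 1)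
        cases hcu : c u <;> cases hcw : c w
        · exact absurd (hcu.trans hcw.symm) hne2
        · decide
        · decide
        · exact absurd (hcu.trans hcw.symm) hne2)
    simpa using hC.colorable

private theorem mec_backward {V : Type*} [Fintype V] [DecidableEq V]
    (G : SimpleGraph V) [DecidableRel G.Adj]
    (D : Finset (V × V))
    (hD : ∀ p ∈ D, G.Adj p.1 p.2)
    (hcover : ∀ u v : V, G.Adj u v → ((u, v) ∈ D ↔ (v, u) ∉ D))
    (k : ℕ)
    (E' : Finset (Sym2 V)) (hsub : ↑E' ⊆ G.edgeSet) (hcard : E'.card ≤ k)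
    (hcol : (G.deleteEdges ↑E').Colorable 2) :
    (∃ N : V × V → V → Option Bool,
      (∀ p ∈ D, ∀ j, (N p j = none ↔ edgeRow p j = none)) ∧
      (∑ p ∈ D, (univ.filter (fun j => N p j ≠ edgeRow p j)).card) ≤ k ∧
      (∃ H1 H2 : V → Bool, ∀ p ∈ D,
        (∀ j b, N p j = some b → b = H1 j) ∨ (∀ j b, N p j = some b → b = H2 j))) := by
  classical
  obtain ⟨C⟩ := hcol
  set c : V → Bool := fun v => decide (C v = 0) with hc
  have hfin2 : ∀ x : Fin 2, x = 0 ∨ x = 1 := by decide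
  have hcC : ∀ u v : V, c u = c v ↔ C u = C v := by
    intro u v
    simp only [hc, decide_eq_decide]
    rcases hfin2 (C u) with h1 | h1 <;> rcases hfin2 (C v) with h2 | h2 <;>
      rw [h1, h2] <;> simp
  have hne : ∀ p ∈ D, p.1 ≠ p.2 := fun p hp => (hD p hp).ne
  set N : V × V → V → Option Bool := fun p j =>
    if j = p.1 then some (if c p.1 = c p.2 then c p.1 else false)
    else if j = p.2 then some (if c p.1 = c p.2 then c p.1 else true) else none with hNdef
  have hNval : ∀ p : V × V, ∀ j, N p j =
      if j = p.1 then some (if c p.1 = c p.2 then c p.1 else false)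
      else if j = p.2 then some (if c p.1 = c p.2 then c p.1 else true) else none :=
    fun p j => rfl
  refine ⟨N, ?_, ?_, ?_⟩
  · intro p hp j
    rw [hNval]
    unfold edgeRow
    by_cases h1 : j = p.1
    · rw [if_pos h1, if_pos h1]; simp
    · rw [if_neg h1, if_neg h1]
      by_cases h2 : j = p.2
      · rw [if_pos h2, if_pos h2]; simp
      · rw [if_neg h2, if_neg h2]
  · -- cost bound
    have hrow : ∀ p ∈ D, (univ.filter (fun j => N p j ≠ edgeRow p j)).card
        = if c p.1 = c p.2 then 1 else 0 := by
      intro p hp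
      have hne' := hne p hp
      by_cases hcc : c p.1 = c p.2
      · rw [if_pos hcc]
        cases hcp : c p.1
        · have hcp2 : c p.2 = false := hcc ▸ hcp
          have : (univ.filter (fun j => N p j ≠ edgeRow p j)) = {p.2} := by
            ext j
            simp only [mem_filter, mem_univ, true_and, mem_singleton]
            rw [hNval]
            unfold edgeRow
            by_cases h1 : j = p.1
            · rw [if_pos h1, if_pos h1, if_pos hcc, hcp]
              simp [h1, hne']
            · rw [if_neg h1, if_neg h1]
              by_cases h2 : j = p.2
              · rw [if_pos h2, if_pos h2, if_pos hcc, hcp]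
                simp [h2]
              · rw [if_neg h2, if_neg h2]
                simp [h2]
          rw [this, card_singleton]
        · have hcp2 : c p.2 = true := hcc ▸ hcp
          have : (univ.filter (fun j => N p j ≠ edgeRow p j)) = {p.1} := by
            ext j
            simp only [mem_filter, mem_univ, true_and, mem_singleton]
            rw [hNval]
            unfold edgeRow
            by_cases h1 : j = p.1
            · rw [if_pos h1, if_pos h1, if_pos hcc, hcp]
              simp [h1]
            · rw [if_neg h1, if_neg h1]
              by_cases h2 : j = p.2
              · rw [if_pos h2, if_pos h2, if_pos hcc, hcp]
                simp [h1, h2, hne'.symm]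
              · rw [if_neg h2, if_neg h2]
                simp [h1]
          rw [this, card_singleton]
      · rw [if_neg hcc]
        rw [card_eq_zero, filter_eq_empty_iff]
        intro j _
        simp only [ne_eq, not_not]
        rw [hNval]
        unfold edgeRow
        by_cases h1 : j = p.1
        · rw [if_pos h1, if_pos h1, if_neg hcc]
        · rw [if_neg h1, if_neg h1]
          by_cases h2 : j = p.2
          · rw [if_pos h2, if_pos h2, if_neg hcc]
          · rw [if_neg h2, if_neg h2]
    calc ∑ p ∈ D, (univ.filter (fun j => N p j ≠ edgeRow p j)).card
        = ∑ p ∈ D, (if c p.1 = c p.2 then 1 else 0) := Finset.sum_congr rfl hrow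
      _ = (D.filter (fun p => c p.1 = c p.2)).card := (Finset.card_filter _ _).symm
      _ ≤ E'.card := by
          apply Finset.card_le_card_of_injOn (fun p => Sym2.mk.uncurry p)
          · intro p hp
            rw [mem_coe, mem_filter] at hp
            by_contra hmem
            have hadj : (G.deleteEdges ↑E').Adj p.1 p.2 := by
              rw [SimpleGraph.deleteEdges_adj]
              exact ⟨hD p hp.1, hmem⟩
            exact (C.valid hadj) ((hcC p.1 p.2).mp hp.2)
          · intro p hp q hq hpq
            simp only [coe_filter, Set.mem_setOf_eq] at hp hq
            rcases Sym2.mk_eq_mk_iff.mp hpq with h | h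
            · exact h
            · exfalso
              have hp' : (q.2, q.1) ∈ D := by
                rw [show (q.2, q.1) = q.swap from rfl, ← h]; exact hp.1
              exact ((hcover q.1 q.2 (hD q hq.1)).mp hq.1) hp'
      _ ≤ k := hcard
  · refine ⟨c, fun v => !(c v), ?_⟩
    intro p hp
    by_cases hcc : c p.1 = c p.2
    · left
      intro j b hb
      rw [hNval] at hb
      by_cases h1 : j = p.1
      · rw [if_pos h1, if_pos hcc] at hb
        rw [h1]
        exact (Option.some_inj.mp hb).symm
      · by_cases h2 : j = p.2
        · rw [if_neg h1, if_pos h2, if_pos hcc] at hb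
          rw [h2, ← hcc]
          exact (Option.some_inj.mp hb).symm
        · rw [if_neg h1, if_neg h2] at hb
          exact absurd hb (by simp)
    · cases hc1 : c p.1
      · left
        intro j b hb
        rw [hNval] at hb
        by_cases h1 : j = p.1
        · rw [if_pos h1, if_neg hcc] at hb
          rw [h1, hc1]
          exact (Option.some_inj.mp hb).symm
        · by_cases h2 : j = p.2
          · rw [if_neg h1, if_pos h2, if_neg hcc] at hb
            have hc2 : c p.2 = true := by
              cases h : c p.2
              · exact absurd (hc1.trans h.symm) hcc
              · rfl
            rw [h2, hc2]
            exact (Option.some_inj.mp hb).symm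
          · rw [if_neg h1, if_neg h2] at hb
            exact absurd hb (by simp)
      · right
        have hc2 : c p.2 = false := by
          cases h : c p.2
          · rfl
          · exact absurd (hc1.trans h.symm) hcc
        intro j b hb
        rw [hNval] at hb
        show b = !(c j)
        by_cases h1 : j = p.1
        · rw [if_pos h1, if_neg hcc] at hb
          rw [h1, hc1]
          simpa using (Option.some_inj.mp hb).symm
        · by_cases h2 : j = p.2
          · rw [if_neg h1, if_pos h2, if_neg hcc] at hb
            rw [h2, hc2]
            simpa using (Option.some_inj.mp hb).symm
          · rw [if_neg h1, if_neg h2] at hb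
            exact absurd hb (by simp)

/-- 1-gap MEC reduction: for a 3-regular graph `G` oriented (via `D`) so that every
vertex is in-in-out or out-out-in (hence every column of the edge matrix has either one
1 and two 0s or two 1s and one 0), the matrix can be made feasible with at most `k`
flips iff `G` can be made bipartite by removing at most `k` edges. -/
theorem mec_flips_iff_bipartite_removal {V : Type*} [Fintype V] [DecidableEq V]
    (G : SimpleGraph V) [DecidableRel G.Adj]
    (D : Finset (V × V))
    (hD : ∀ p ∈ D, G.Adj p.1 p.2)
    (hcover : ∀ u v : V, G.Adj u v → ((u, v) ∈ D ↔ (v, u) ∉ D))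
    (hcolumns : ∀ v : V,
      ((D.filter (fun p => p.2 = v)).card = 1 ∧ (D.filter (fun p => p.1 = v)).card = 2) ∨
      ((D.filter (fun p => p.2 = v)).card = 2 ∧ (D.filter (fun p => p.1 = v)).card = 1))
    (k : ℕ) :
    (∃ N : V × V → V → Option Bool,
      (∀ p ∈ D, ∀ j, (N p j = none ↔ edgeRow p j = none)) ∧
      (∑ p ∈ D, (univ.filter (fun j => N p j ≠ edgeRow p j)).card) ≤ k ∧
      (∃ H1 H2 : V → Bool, ∀ p ∈ D,
        (∀ j b, N p j = some b → b = H1 j) ∨ (∀ j b, N p j = some b → b = H2 j)))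
    ↔ (∃ E' : Finset (Sym2 V), ↑E' ⊆ G.edgeSet ∧ E'.card ≤ k ∧
        (G.deleteEdges ↑E').Colorable 2) := by
  constructor
  · rintro ⟨N, hhole, hcost, H1, H2, hfit⟩
    exact mec_forward G D hD hcover hcolumns k N hhole hcost H1 H2 hfit
  · rintro ⟨E', hsub, hcard, hcol⟩
    exact mec_backward G D hD hcover k E' hsub hcard hcol
end

section
/- Let G be an undirected 3-regular graph oriented so that every vertex is either in-in-out or out-out-in, and let M be the |E|×|V| SNP matrix where the row for edge (u,v) has 1(s) in the column(s) for u, a 0 in a column for v, holes elsewhere (one or two columns per vertex depending on type). A set of rows of M is pairwise non-conflicting if and only if the corresponding set of vertices is an independent set in G. -/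
/-!
An arc `(u, w)` of the orientation puts a 0 of row `u` into a column of `w`, where row `w` has a 1,
so adjacent rows conflict. Conversely, a conflict in column `c` pairs a 1 of some
row `x` with a 0 of some row `y`; the 0 sits in a column of a child of `y`, and since the
column sets are disjoint that child is `x`, so `x` and `y` are adjacent.
-/

section

variable {V C : Type*} {M : V → C → Option Bool}

/-- In the partial 0/1 matrix `M`, `none` encodes a hole. -/
def RowsConflict (M : V → C → Option Bool) (u v : V) : Prop :=
  ∃ c : C, ∃ b1 b2 : Bool, M u c = some b1 ∧ M v c = some b2 ∧ b1 ≠ b2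

theorem RowsConflict.symm {u v : V} (h : RowsConflict M u v) : RowsConflict M v u := by
  obtain ⟨c, b1, b2, h1, h2, hne⟩ := h
  exact ⟨c, b2, b1, h2, h1, hne.symm⟩

theorem RowsConflict.exists_true_false {u v : V} (h : RowsConflict M u v) :
    ∃ c, (M u c = some true ∧ M v c = some false) ∨
      (M u c = some false ∧ M v c = some true) := by
  obtain ⟨c, b1, b2, h1, h2, hne⟩ := h
  refine ⟨c, ?_⟩
  cases b1 <;> cases b2 <;> simp_all

theorem rowsConflict_of_mem_orientation {D : Finset (V × V)}
    {col : V → Finset C} (hT : ∀ v c, M v c = some true ↔ c ∈ col v)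
    (hF' : ∀ u w, (u, w) ∈ D → ∃ c ∈ col w, M u c = some false)
    {u w : V} (huw : (u, w) ∈ D) : RowsConflict M u w := by
  obtain ⟨c, hc, hMu⟩ := hF' u w huw
  exact ⟨c, false, true, hMu, (hT w c).mpr hc, Bool.false_ne_true⟩

theorem mem_orientation_of_true_of_false {D : Finset (V × V)} {col : V → Finset C}
    (hdisj : ∀ u v, u ≠ v → Disjoint (col u) (col v))
    (hT : ∀ v c, M v c = some true ↔ c ∈ col v)
    (hF : ∀ u c, M u c = some false → ∃ w, (u, w) ∈ D ∧ c ∈ col w)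
    {x y : V} {c : C} (hx : M x c = some true) (hy : M y c = some false) : (y, x) ∈ D := by
  obtain ⟨w, hyw, hcw⟩ := hF y c hy
  have hwx : w = x := by
    by_contra hne
    exact Finset.disjoint_left.mp (hdisj w x hne) hcw ((hT x c).mp hx)
  exact hwx ▸ hyw

theorem rowsConflict_iff_adj {G : SimpleGraph V} {D : Finset (V × V)} {col : V → Finset C}
    (hD : ∀ p ∈ D, G.Adj p.1 p.2)
    (hadj : ∀ u v, G.Adj u v → (u, v) ∈ D ∨ (v, u) ∈ D)
    (hdisj : ∀ u v, u ≠ v → Disjoint (col u) (col v))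
    (hT : ∀ v c, M v c = some true ↔ c ∈ col v)
    (hF : ∀ u c, M u c = some false → ∃ w, (u, w) ∈ D ∧ c ∈ col w)
    (hF' : ∀ u w, (u, w) ∈ D → ∃ c ∈ col w, M u c = some false)
    (u v : V) : RowsConflict M u v ↔ G.Adj u v := by
  constructor
  · intro h
    obtain ⟨c, ⟨hu, hv⟩ | ⟨hu, hv⟩⟩ := h.exists_true_false
    · exact (hD _ (mem_orientation_of_true_of_false hdisj hT hF hu hv)).symm
    · exact hD _ (mem_orientation_of_true_of_false hdisj hT hF hv hu)
  · intro h
    rcases hadj u v h with huv | hvu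
    · exact rowsConflict_of_mem_orientation hT hF' huv
    · exact (rowsConflict_of_mem_orientation hT hF' hvu).symm

end

theorem rows_nonconflicting_iff_independent_general {V C : Type*}
    (G : SimpleGraph V) (D : Finset (V × V))
    (hD : ∀ p ∈ D, G.Adj p.1 p.2)
    (hadj : ∀ u v : V, G.Adj u v → (u, v) ∈ D ∨ (v, u) ∈ D)
    (col : V → Finset C)
    (hdisj : ∀ u v : V, u ≠ v → Disjoint (col u) (col v))
    (M : V → C → Option Bool)
    (hT : ∀ v : V, ∀ c : C, (M v c = some true ↔ c ∈ col v))
    (hF : ∀ u : V, ∀ c : C, M u c = some false → ∃ w : V, (u, w) ∈ D ∧ c ∈ col w)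
    (hF' : ∀ u w : V, (u, w) ∈ D → ∃ c ∈ col w, M u c = some false)
    (S : Set V) :
    (∀ u ∈ S, ∀ v ∈ S,
        ¬ ∃ c : C, ∃ b1 b2 : Bool, M u c = some b1 ∧ M v c = some b2 ∧ b1 ≠ b2)
    ↔ (∀ u ∈ S, ∀ v ∈ S, ¬ G.Adj u v) :=
  forall₂_congr fun u _ => forall₂_congr fun v _ =>
    not_congr (rowsConflict_iff_adj hD hadj hdisj hT hF hF' u v)

/-- Independent-set reduction: in the matrix built from a 3-regular graph `G` oriented
via `D` (rows indexed by vertices; the row of `v` has 1s exactly in the columns `col v`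
assigned to `v`, and a 0 in a column assigned to each child of `v`), a set of rows is
pairwise non-conflicting iff the corresponding vertex set is independent in `G`. -/
theorem rows_nonconflicting_iff_independent {V C : Type*} [DecidableEq V]
    (G : SimpleGraph V) (D : Finset (V × V))
    (hD : ∀ p ∈ D, G.Adj p.1 p.2)
    (hadj : ∀ u v : V, G.Adj u v → (u, v) ∈ D ∨ (v, u) ∈ D)
    (col : V → Finset C)
    (hdisj : ∀ u v : V, u ≠ v → Disjoint (col u) (col v))
    (M : V → C → Option Bool)
    (hT : ∀ v : V, ∀ c : C, (M v c = some true ↔ c ∈ col v))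
    (hF : ∀ u : V, ∀ c : C, M u c = some false → ∃ w : V, (u, w) ∈ D ∧ c ∈ col w)
    (hF' : ∀ u w : V, (u, w) ∈ D → ∃ c ∈ col w, M u c = some false)
    (S : Set V) :
    (∀ u ∈ S, ∀ v ∈ S,
        ¬ ∃ c : C, ∃ b1 b2 : Bool, M u c = some b1 ∧ M v c = some b2 ∧ b1 ≠ b2)
    ↔ (∀ u ∈ S, ∀ v ∈ S, ¬ G.Adj u v) :=
  rows_nonconflicting_iff_independent_general G D hD hadj col hdisj M hT hF hF' S
end

section
/- Let D be a directed graph whose vertex set is partitioned into V_out (each vertex with out-degree 2, in-degree 1) and V_in (each vertex with in-degree 2, out-degree 1). Then there exists a collection of vertex-disjoint directed paths, each ending at a vertex of V_in, that together cover all vertices of V_out. -/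
open Finset

theorem exists_good_f {V : Type*} [Fintype V] [DecidableEq V]
    (A : V → V → Prop) [DecidableRel A] (hloopless : ∀ v, ¬ A v v)
    (Vout Vin : Finset V)
    (hpart : ∀ v : V, (v ∈ Vout ∨ v ∈ Vin) ∧ ¬(v ∈ Vout ∧ v ∈ Vin))
    (hout : ∀ v ∈ Vout, (univ.filter (fun w => A v w)).card = 2 ∧
                        (univ.filter (fun w => A w v)).card = 1)
    (hin : ∀ v ∈ Vin, (univ.filter (fun w => A v w)).card = 1 ∧
                      (univ.filter (fun w => A w v)).card = 2) :
    ∃ f : V → V, (∀ u ∈ Vout, A u (f u)) ∧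
      (∀ u ∈ Vout, ∀ v ∈ Vout, f u = f v → u = v) ∧
      (∀ u ∈ Vout, ∀ n, 0 < n → (∀ m < n, f^[m] u ∈ Vout) → f^[n] u ≠ u) := by
  classical
  -- the unique in-neighbour of a vertex of Vout
  set p : V → V := fun v => if h : ∃ w, A w v then h.choose else v with hp
  have hpA : ∀ v ∈ Vout, A (p v) v := by
    intro v hv
    have h1 : (univ.filter (fun w => A w v)).card = 1 := (hout v hv).2
    have hne : (univ.filter (fun w => A w v)).Nonempty := by
      rw [← Finset.card_pos, h1]; omega
    obtain ⟨w, hw⟩ := hne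
    have hex : ∃ w, A w v := ⟨w, (Finset.mem_filter.mp hw).2⟩
    simp only [hp, dif_pos hex]
    exact hex.choose_spec
  have hpuniq : ∀ v ∈ Vout, ∀ w, A w v → w = p v := by
    intro v hv w hw
    have h1 : (univ.filter (fun w => A w v)).card = 1 := (hout v hv).2
    obtain ⟨a, ha⟩ := Finset.card_eq_one.mp h1
    have h2 : w ∈ univ.filter (fun w => A w v) := by simp [hw]
    have h3 : p v ∈ univ.filter (fun w => A w v) := by simp [hpA v hv]
    rw [ha] at h2 h3
    simp only [Finset.mem_singleton] at h2 h3
    rw [h2, h3]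
  -- the cyclic part of Vout
  set K : Finset V := univ.filter
      (fun u => ∃ n, 0 < n ∧ p^[n] u = u ∧ ∀ m < n, p^[m] u ∈ Vout) with hK
  have hKmem : ∀ u, u ∈ K ↔ ∃ n, 0 < n ∧ p^[n] u = u ∧ ∀ m < n, p^[m] u ∈ Vout := by
    intro u; simp [hK]
  have hKV : ∀ u ∈ K, u ∈ Vout := by
    intro u hu
    obtain ⟨n, hn, _, hall⟩ := (hKmem u).mp hu
    have := hall 0 hn
    simpa using this
  have hKall : ∀ u ∈ K, ∀ m, p^[m] u ∈ Vout := by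
    intro u hu m
    obtain ⟨n, hn, hcyc, hall⟩ := (hKmem u).mp hu
    have hmul : ∀ k, p^[k * n] u = u := by
      intro k
      induction k with
      | zero => simp
      | succ k ih => rw [Nat.succ_mul, Function.iterate_add_apply, hcyc, ih]
    have : p^[m] u = p^[m % n] u := by
      conv_lhs => rw [show m = m % n + m / n * n from (Nat.mod_add_div' m n).symm]
      rw [Function.iterate_add_apply, hmul]
    rw [this]
    exact hall _ (Nat.mod_lt _ hn)
  have hKiter : ∀ u ∈ K, ∀ m, p^[m] u ∈ K := by
    intro u hu m
    obtain ⟨n, hn, hcyc, hall⟩ := (hKmem u).mp hu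
    refine (hKmem _).mpr ⟨n, hn, ?_, ?_⟩
    · rw [← Function.iterate_add_apply, Nat.add_comm, Function.iterate_add_apply, hcyc]
    · intro k _
      rw [← Function.iterate_add_apply]
      exact hKall u hu _
  have hKp : ∀ u ∈ K, p u ∈ K := fun u hu => hKiter u hu 1
  have hKin : ∀ u ∈ K, ∀ x, A x u → x = p u ∧ p u ∈ K := by
    intro u hu x hx
    exact ⟨hpuniq u (hKV u hu) x hx, hKp u hu⟩
  have hpinj : ∀ u ∈ K, ∀ v ∈ K, p u = p v → u = v := by
    intro u hu v hv hEq
    obtain ⟨a, ha, hca, _⟩ := (hKmem u).mp hu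
    obtain ⟨b, hb, hcb, _⟩ := (hKmem v).mp hv
    have hmu : ∀ k, p^[k * a] u = u := by
      intro k; induction k with
      | zero => simp
      | succ k ih => rw [Nat.succ_mul, Function.iterate_add_apply, hca, ih]
    have hmv : ∀ k, p^[k * b] v = v := by
      intro k; induction k with
      | zero => simp
      | succ k ih => rw [Nat.succ_mul, Function.iterate_add_apply, hcb, ih]
    have h1 : p^[a * b] u = u := by rw [show a * b = b * a by ring]; exact hmu b
    have h2 : p^[a * b] v = v := hmv a
    have hab : 1 ≤ a * b := Nat.one_le_iff_ne_zero.mpr (by positivity)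
    calc u = p^[a*b] u := h1.symm
    _ = p^[a*b - 1] (p u) := by
        conv_lhs => rw [show a*b = a*b - 1 + 1 by omega]
        rw [Function.iterate_succ_apply]
    _ = p^[a*b - 1] (p v) := by rw [hEq]
    _ = p^[a*b] v := by
        conv_rhs => rw [show a*b = a*b - 1 + 1 by omega]
        rw [Function.iterate_succ_apply]
    _ = v := h2
  -- the successor map on K
  set σ : V → V := fun u => if h : ∃ v, v ∈ K ∧ p v = u then h.choose else u with hσdef
  have hσ : ∀ u ∈ K, σ u ∈ K ∧ p (σ u) = u := by
    intro u hu
    obtain ⟨n, hn, hcyc, _⟩ := (hKmem u).mp hu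
    have hex : ∃ v, v ∈ K ∧ p v = u := by
      refine ⟨p^[n-1] u, hKiter u hu _, ?_⟩
      have h2 : p^[n] u = p (p^[n-1] u) := by
        conv_lhs => rw [show n = (n-1)+1 by omega]
        rw [Function.iterate_succ_apply']
      rw [← h2]; exact hcyc
    simp only [hσdef, dif_pos hex]
    exact ⟨hex.choose_spec.1, hex.choose_spec.2⟩
  have hσA : ∀ u ∈ K, A u (σ u) := by
    intro u hu
    obtain ⟨h1, h2⟩ := hσ u hu
    have := hpA (σ u) (hKV _ h1)
    rwa [h2] at this
  have hσinj : ∀ u ∈ K, ∀ v ∈ K, σ u = σ v → u = v := by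
    intro u hu v hv hEq
    rw [← (hσ u hu).2, ← (hσ v hv).2, hEq]
  have hσedge : ∀ u ∈ K, ∀ v ∈ K, A u v → v = σ u := by
    intro u hu v hv hA
    have h1 : u = p v := hpuniq v (hKV v hv) u hA
    exact hpinj v hv (σ u) (hσ u hu).1 (by rw [← h1, (hσ u hu).2])
  have hpσ : ∀ u ∈ K, σ (p u) = u := by
    intro u hu
    exact hpinj _ (hσ _ (hKp u hu)).1 _ hu (hσ (p u) (hKp u hu)).2
  -- every vertex of K has an out-neighbour outside K
  have hKout : ∀ u ∈ K, ∃ w, A u w ∧ w ∉ K := by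
    intro u hu
    by_contra hc
    push_neg at hc
    have hsub : univ.filter (fun w => A u w) ⊆ {σ u} := by
      intro w hw
      simp only [Finset.mem_filter] at hw
      simp only [Finset.mem_singleton]
      exact (hσedge u hu w (hc w hw.2) hw.2)
    have := Finset.card_le_card hsub
    rw [(hout u (hKV u hu)).1] at this
    simp at this
  have hper : ∀ u ∈ K, ∃ a, 0 < a ∧ ∀ k, p^[k * a] u = u := by
    intro u hu
    obtain ⟨a, ha, hc, _⟩ := (hKmem u).mp hu
    refine ⟨a, ha, ?_⟩
    intro k
    induction k with
    | zero => simp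
    | succ k ih => rw [Nat.succ_mul, Function.iterate_add_apply, hc, ih]
  -- orbits (the circuits of K)
  set orb : V → Finset V := fun u => K.filter (fun v => ∃ n, p^[n] u = v) with horb
  have horbmem : ∀ u v, v ∈ orb u ↔ v ∈ K ∧ ∃ n, p^[n] u = v := by
    intro u v; simp [horb]
  have horbself : ∀ u ∈ K, u ∈ orb u := fun u hu => (horbmem u u).mpr ⟨hu, 0, rfl⟩
  have horbK : ∀ u, orb u ⊆ K := fun u => Finset.filter_subset _ _
  have horbeq : ∀ u ∈ K, ∀ v, v ∈ orb u → orb v = orb u := by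
    intro u hu v hv
    obtain ⟨hvK, n, hnv⟩ := (horbmem u v).mp hv
    apply Finset.Subset.antisymm
    · intro w hw
      obtain ⟨hwK, m, hmw⟩ := (horbmem v w).mp hw
      refine (horbmem u w).mpr ⟨hwK, m + n, ?_⟩
      rw [Function.iterate_add_apply, hnv, hmw]
    · intro w hw
      obtain ⟨hwK, m, hmw⟩ := (horbmem u w).mp hw
      obtain ⟨a, ha, hka⟩ := hper u hu
      have hN : p^[(n+1) * a - n] v = u := by
        rw [← hnv, ← Function.iterate_add_apply,
          show (n+1) * a - n + n = (n+1) * a by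
            have := Nat.le_mul_of_pos_right (n+1) ha; omega]
        exact hka (n+1)
      refine (horbmem v w).mpr ⟨hwK, m + ((n+1) * a - n), ?_⟩
      rw [Function.iterate_add_apply, hN, hmw]
  have hporb : ∀ u ∈ K, p u ∈ orb u := by
    intro u hu
    exact (horbmem u (p u)).mpr ⟨hKp u hu, 1, rfl⟩
  have hpne : ∀ u ∈ Vout, p u ≠ u := by
    intro u hu h
    exact hloopless u (by nth_rewrite 1 [← h]; exact hpA u hu)
  have horb2 : ∀ u ∈ K, 2 ≤ (orb u).card := by
    intro u hu
    have h1 : ({p u, u} : Finset V) ⊆ orb u := by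
      intro x hx
      rcases Finset.mem_insert.mp hx with h | h
      · subst h; exact hporb u hu
      · rw [Finset.mem_singleton.mp h]; exact horbself u hu
    have h2 : ({p u, u} : Finset V).card = 2 :=
      Finset.card_pair (hpne u (hKV u hu))
    rw [← h2]; exact Finset.card_le_card h1
  have horbσ : ∀ w ∈ K, orb (σ w) = orb w := by
    intro w hw
    have h1 : σ w ∈ K := (hσ w hw).1
    have h2 : w ∈ orb (σ w) := (horbmem (σ w) w).mpr ⟨hw, 1, by simp [(hσ w hw).2]⟩
    exact (horbeq (σ w) h1 w h2) ▸ rfl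
  -- no edge enters K from outside
  have hnoK : ∀ u, u ∉ K → ∀ v ∈ K, ¬ A u v := by
    intro u hu v hv hA
    exact hu ((hKin v hv u hA).1 ▸ (hKin v hv u hA).2)
  -- blocks
  set B : Finset (Finset V) :=
      ((Vout \ K).image fun u => ({u} : Finset V)) ∪ K.image orb with hB
  have hBsing : ∀ u ∈ Vout, u ∉ K → ({u} : Finset V) ∈ B := by
    intro u hu hk
    exact Finset.mem_union_left _ (Finset.mem_image_of_mem _ (Finset.mem_sdiff.mpr ⟨hu, hk⟩))
  have hBorb : ∀ u ∈ K, orb u ∈ B := by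
    intro u hu
    exact Finset.mem_union_right _ (Finset.mem_image_of_mem _ hu)
  have hBcases : ∀ b ∈ B, (∃ u ∈ Vout, u ∉ K ∧ b = {u}) ∨ (∃ u ∈ K, b = orb u) := by
    intro b hb
    rcases Finset.mem_union.mp hb with h | h
    · obtain ⟨u, hu, rfl⟩ := Finset.mem_image.mp h
      have := Finset.mem_sdiff.mp hu
      exact Or.inl ⟨u, this.1, this.2, rfl⟩
    · obtain ⟨u, hu, rfl⟩ := Finset.mem_image.mp h
      exact Or.inr ⟨u, hu, rfl⟩
  have hBsubV : ∀ b ∈ B, b ⊆ Vout := by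
    intro b hb
    rcases hBcases b hb with ⟨u, hu, _, rfl⟩ | ⟨u, hu, rfl⟩
    · simpa using hu
    · exact fun x hx => hKV x (horbK u hx)
  have hBdisj : ∀ b ∈ B, ∀ b' ∈ B, b ≠ b' → Disjoint b b' := by
    intro b hb b' hb' hne
    rw [Finset.disjoint_left]
    intro x hx hx'
    rcases hBcases b hb with ⟨u, hu, huk, rfl⟩ | ⟨u, hu, rfl⟩ <;>
      rcases hBcases b' hb' with ⟨v, hv, hvk, rfl⟩ | ⟨v, hv, rfl⟩
    · simp only [Finset.mem_singleton] at hx hx'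
      exact hne (by rw [hx.symm.trans hx'])
    · exact huk (Finset.mem_singleton.mp hx ▸ horbK v hx')
    · exact hvk (Finset.mem_singleton.mp hx' ▸ horbK u hx)
    · exact hne ((horbeq u hu x hx).symm.trans (horbeq v hv x hx'))
  -- exterior out-neighbour choice
  set g : V → V := fun w => if h : ∃ v, A w v ∧ v ∉ K then h.choose else w with hg
  have hgK : ∀ w ∈ K, A w (g w) ∧ g w ∉ K := by
    intro w hw
    have hex := hKout w hw
    have hex' : ∃ v, A w v ∧ v ∉ K := hex
    simp only [hg, dif_pos hex']
    exact hex'.choose_spec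
  -- edge sets out of blocks
  set Eb : Finset V → Finset (V × V) :=
      fun b => (b ×ˢ univ).filter (fun e => A e.1 e.2 ∧ e.2 ∉ K) with hEbdef
  have hEbmem : ∀ b e, e ∈ Eb b ↔ e.1 ∈ b ∧ A e.1 e.2 ∧ e.2 ∉ K := by
    intro b e
    simp [hEbdef, Finset.mem_filter, Finset.mem_product, and_assoc]
  have hEb2 : ∀ b ∈ B, 2 ≤ (Eb b).card := by
    intro b hb
    rcases hBcases b hb with ⟨u, hu, huk, rfl⟩ | ⟨u, hu, rfl⟩
    · obtain ⟨x, y, hxy, hxyout⟩ := Finset.card_eq_two.mp (hout u hu).1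
      have hxA : A u x := by
        have : x ∈ univ.filter (fun w => A u w) := by rw [hxyout]; simp
        exact (Finset.mem_filter.mp this).2
      have hyA : A u y := by
        have : y ∈ univ.filter (fun w => A u w) := by rw [hxyout]; simp
        exact (Finset.mem_filter.mp this).2
      have hsub : ({(u, x), (u, y)} : Finset (V × V)) ⊆ Eb {u} := by
        intro e he
        rcases Finset.mem_insert.mp he with h | h
        · subst h
          exact (hEbmem _ _).mpr ⟨Finset.mem_singleton_self u, hxA,
            fun hk => hnoK u huk x hk hxA⟩
        · rw [Finset.mem_singleton.mp h]
          exact (hEbmem _ _).mpr ⟨Finset.mem_singleton_self u, hyA,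
            fun hk => hnoK u huk y hk hyA⟩
      have h2 : ({(u, x), (u, y)} : Finset (V × V)).card = 2 :=
        Finset.card_pair (by simp [hxy])
      rw [← h2]; exact Finset.card_le_card hsub
    · have hsub : (orb u).image (fun w => (w, g w)) ⊆ Eb (orb u) := by
        intro e he
        obtain ⟨w, hw, rfl⟩ := Finset.mem_image.mp he
        have hwK := horbK u hw
        exact (hEbmem _ _).mpr ⟨hw, (hgK w hwK).1, (hgK w hwK).2⟩
      have hinj : Set.InjOn (fun w => (w, g w)) (orb u) := by
        intro a _ b _ hab
        exact congrArg Prod.fst hab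
      have h2 : ((orb u).image (fun w => (w, g w))).card = (orb u).card :=
        Finset.card_image_of_injOn hinj
      calc 2 ≤ (orb u).card := horb2 u hu
      _ = _ := h2.symm
      _ ≤ (Eb (orb u)).card := Finset.card_le_card hsub
  -- the bipartite neighbourhood function for Hall's theorem
  set t : {b // b ∈ B} → Finset V :=
      fun b => univ.filter (fun v => v ∉ K ∧ ∃ w ∈ b.1, A w v) with ht
  have htmem : ∀ b v, v ∈ t b ↔ v ∉ K ∧ ∃ w ∈ b.1, A w v := by
    intro b v; simp [ht]
  have hins2 : ∀ v : V, (univ.filter (fun w => A w v)).card ≤ 2 := by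
    intro v
    rcases (hpart v).1 with h | h
    · rw [(hout v h).2]; omega
    · rw [(hin v h).2]
  have hall : ∀ s : Finset {b // b ∈ B}, s.card ≤ (s.biUnion t).card := by
    intro s
    have hcardE : (s.biUnion (fun b => Eb b.1)).card = ∑ b ∈ s, (Eb b.1).card := by
      apply Finset.card_biUnion
      intro b hbs b' hbs' hne
      show Disjoint (Eb b.1) (Eb b'.1)
      rw [Finset.disjoint_left]
      intro e he he'
      have h1 := ((hEbmem _ e).mp he).1
      have h2 := ((hEbmem _ e).mp he').1
      have hbb : b.1 ≠ b'.1 := fun h => hne (Subtype.ext h)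
      exact (Finset.disjoint_left.mp (hBdisj b.1 b.2 b'.1 b'.2 hbb)) h1 h2
    have hlow : 2 * s.card ≤ (s.biUnion (fun b => Eb b.1)).card := by
      rw [hcardE]
      calc 2 * s.card = ∑ _b ∈ s, 2 := by rw [Finset.sum_const, smul_eq_mul, mul_comm]
      _ ≤ ∑ b ∈ s, (Eb b.1).card := Finset.sum_le_sum (fun b _ => hEb2 b.1 b.2)
    have hup : (s.biUnion (fun b => Eb b.1)).card ≤ 2 * (s.biUnion t).card := by
      have hsub : s.biUnion (fun b => Eb b.1) ⊆
          (s.biUnion t).biUnion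
            (fun v => (univ.filter (fun w => A w v)).image (fun w => (w, v))) := by
        intro e he
        obtain ⟨b, hbs, hbe⟩ := Finset.mem_biUnion.mp he
        obtain ⟨h1, h2, h3⟩ := (hEbmem _ e).mp hbe
        refine Finset.mem_biUnion.mpr ⟨e.2, ?_, ?_⟩
        · exact Finset.mem_biUnion.mpr ⟨b, hbs, (htmem b e.2).mpr ⟨h3, e.1, h1, h2⟩⟩
        · exact Finset.mem_image.mpr ⟨e.1, by simp [h2]⟩
      calc (s.biUnion (fun b => Eb b.1)).card ≤ _ := Finset.card_le_card hsub
      _ ≤ ∑ v ∈ s.biUnion t,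
            ((univ.filter (fun w => A w v)).image (fun w => (w, v))).card :=
          Finset.card_biUnion_le
      _ ≤ ∑ v ∈ s.biUnion t, 2 := by
          refine Finset.sum_le_sum (fun v _ => ?_)
          exact le_trans Finset.card_image_le (hins2 v)
      _ = 2 * (s.biUnion t).card := by rw [Finset.sum_const, smul_eq_mul, mul_comm]
    omega
  obtain ⟨c, hcinj, hct⟩ := (Finset.all_card_le_biUnion_card_iff_exists_injective t).mp hall
  have hctmem : ∀ b, c b ∉ K ∧ ∃ w ∈ b.1, A w (c b) := by
    intro b
    exact (htmem b (c b)).mp (hct b)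
  set wit : {b // b ∈ B} → V := fun b => ((hctmem b).2).choose with hwitdef
  have hwitmem : ∀ b, wit b ∈ b.1 ∧ A (wit b) (c b) := by
    intro b
    exact ((hctmem b).2).choose_spec
  -- the block of a vertex
  set blk : V → Finset V := fun u => if u ∈ K then orb u else {u} with hblkdef
  have hblkK : ∀ u ∈ K, blk u = orb u := by intro u hu; simp [hblkdef, hu]
  have hblkN : ∀ u ∉ K, blk u = {u} := by intro u hu; simp [hblkdef, hu]
  have hblkB : ∀ u ∈ Vout, blk u ∈ B := by
    intro u hu
    by_cases h : u ∈ K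
    · rw [hblkK u h]; exact hBorb u h
    · rw [hblkN u h]; exact hBsing u hu h
  set cc : V → V := fun u => if h : blk u ∈ B then c ⟨blk u, h⟩ else u with hccdef
  set wt : V → V := fun u => if h : blk u ∈ B then wit ⟨blk u, h⟩ else u with hwtdef
  have hccP : ∀ u ∈ Vout, cc u ∉ K ∧ wt u ∈ blk u ∧ A (wt u) (cc u) := by
    intro u hu
    have hb := hblkB u hu
    simp only [hccdef, hwtdef, dif_pos hb]
    exact ⟨(hctmem ⟨blk u, hb⟩).1, (hwitmem ⟨blk u, hb⟩).1, (hwitmem ⟨blk u, hb⟩).2⟩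
  have hcceq : ∀ u v, blk u = blk v → blk u ∈ B → cc u = cc v ∧ wt u = wt v := by
    intro u v h hb
    have hb' : blk v ∈ B := h ▸ hb
    constructor
    · simp only [hccdef, dif_pos hb, dif_pos hb']
      congr 1
      exact Subtype.ext h
    · simp only [hwtdef, dif_pos hb, dif_pos hb']
      congr 1
      exact Subtype.ext h
  have hccinj : ∀ u ∈ Vout, ∀ v ∈ Vout, cc u = cc v → blk u = blk v := by
    intro u hu v hv h
    have h1 := hblkB u hu
    have h2 := hblkB v hv
    simp only [hccdef, dif_pos h1, dif_pos h2] at h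
    exact congrArg Subtype.val (hcinj h)
  have hwtN : ∀ u ∈ Vout, u ∉ K → wt u = u := by
    intro u hu hk
    have := (hccP u hu).2.1
    rwa [hblkN u hk, Finset.mem_singleton] at this
  set f : V → V := fun u =>
    if u ∈ K then (if u = wt u then cc u else σ u)
    else (if u ∈ Vout then cc u else u) with hfdef
  have hfK1 : ∀ u ∈ K, u = wt u → f u = cc u := by
    intro u hu h; simp [hfdef, hu, ← h]
  have hfK2 : ∀ u ∈ K, u ≠ wt u → f u = σ u := by
    intro u hu h; simp [hfdef, hu, h]
  have hfN : ∀ u ∈ Vout, u ∉ K → f u = cc u := by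
    intro u hu hk; simp [hfdef, hu, hk]
  -- property 1 : f follows edges
  have hf1 : ∀ u ∈ Vout, A u (f u) := by
    intro u hu
    by_cases hk : u ∈ K
    · by_cases hw : u = wt u
      · rw [hfK1 u hk hw]
        have := (hccP u hu).2.2
        rwa [← hw] at this
      · rw [hfK2 u hk hw]
        exact hσA u hk
    · rw [hfN u hu hk]
      have := (hccP u hu).2.2
      rwa [hwtN u hu hk] at this
  -- values of f : cc-values are outside K, σ-values inside
  have hfcase : ∀ u ∈ Vout, (f u = cc u ∧ cc u ∉ K ∧ (u ∉ K ∨ u = wt u)) ∨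
      (u ∈ K ∧ u ≠ wt u ∧ f u = σ u ∧ σ u ∈ K) := by
    intro u hu
    by_cases hk : u ∈ K
    · by_cases hw : u = wt u
      · exact Or.inl ⟨hfK1 u hk hw, (hccP u hu).1, Or.inr hw⟩
      · exact Or.inr ⟨hk, hw, hfK2 u hk hw, (hσ u hk).1⟩
    · exact Or.inl ⟨hfN u hu hk, (hccP u hu).1, Or.inl hk⟩
  -- property 2 : injectivity on Vout
  have hf2 : ∀ u ∈ Vout, ∀ v ∈ Vout, f u = f v → u = v := by
    intro u hu v hv hEq
    rcases hfcase u hu with ⟨hu1, hu2, hu3⟩ | ⟨hu1, hu2, hu3, hu4⟩ <;>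
      rcases hfcase v hv with ⟨hv1, hv2, hv3⟩ | ⟨hv1, hv2, hv3, hv4⟩
    · -- both cc
      rw [hu1, hv1] at hEq
      have hbb := hccinj u hu v hv hEq
      rcases hu3 with hu3 | hu3 <;> rcases hv3 with hv3 | hv3
      · rw [hblkN u hu3, hblkN v hv3] at hbb
        exact Finset.singleton_injective hbb
      · -- u ∉ K, v = wt v ; v ∈ K or not?
        by_cases hvk : v ∈ K
        · exfalso
          rw [hblkN u hu3, hblkK v hvk] at hbb
          exact hu3 (horbK v (hbb ▸ Finset.mem_singleton_self u))
        · rw [hblkN u hu3, hblkN v hvk] at hbb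
          exact Finset.singleton_injective hbb
      · by_cases huk : u ∈ K
        · exfalso
          rw [hblkN v hv3, hblkK u huk] at hbb
          exact hv3 (horbK u (hbb.symm ▸ Finset.mem_singleton_self v))
        · rw [hblkN u huk, hblkN v hv3] at hbb
          exact Finset.singleton_injective hbb
      · have := (hcceq u v hbb (hblkB u hu)).2
        rw [hu3, hv3, this]
    · -- u cc, v σ : impossible
      exfalso
      have hcs : cc u = σ v := hu1.symm.trans (hEq.trans hv3)
      exact hu2 (hcs.symm ▸ hv4)
    · exfalso
      have hcs : cc v = σ u := hv1.symm.trans (hEq.symm.trans hu3)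
      exact hv2 (hcs.symm ▸ hu4)
    · rw [hu3, hv3] at hEq
      exact hσinj u hu1 v hv1 hEq
  -- step lemma : if f v lands in K then v was in K and the step was σ
  have hstepK : ∀ v ∈ Vout, f v ∈ K → v ∈ K ∧ f v = σ v := by
    intro v hv hfv
    rcases hfcase v hv with ⟨h1, h2, _⟩ | ⟨h1, _, h3, _⟩
    · exact absurd (h1 ▸ hfv) h2
    · exact ⟨h1, h3⟩
  -- property 3 : no cycles inside Vout
  have hf3 : ∀ u ∈ Vout, ∀ n, 0 < n → (∀ m < n, f^[m] u ∈ Vout) → f^[n] u ≠ u := by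
    intro u hu n hn hall hEq
    -- abbreviation for the cycle
    have hujV : ∀ m ≤ n, f^[m] u ∈ Vout := by
      intro m hm
      rcases Nat.lt_or_ge m n with h | h
      · exact hall m h
      · have : m = n := by omega
        rw [this, hEq]; exact hu
    have hstep : ∀ j, f^[j+1] u = f (f^[j] u) := by
      intro j; rw [Function.iterate_succ_apply']
    -- if any iterate is in K, then u itself is
    have hback : ∀ m ≤ n, f^[m] u ∈ K → u ∈ K := by
      intro m
      induction m with
      | zero => intro _ h; simpa using h
      | succ m ih =>
        intro hm hK'
        rw [hstep m] at hK'
        have := hstepK (f^[m] u) (hujV m (by omega)) hK'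
        exact ih (by omega) this.1
    by_cases hcase : u ∈ K
    · -- the cycle stays in K and consists of σ-steps
      have hchain : ∀ d ≤ n, f^[n-d] u ∈ K ∧ (0 < d → f^[n-d+1] u = σ (f^[n-d] u)) := by
        intro d
        induction d with
        | zero => intro _; rw [Nat.sub_zero, hEq]; exact ⟨hcase, by omega⟩
        | succ d ih =>
          intro hd
          have hprev := (ih (by omega)).1
          have h1 : f^[(n - (d+1)) + 1] u = f (f^[n-(d+1)] u) := hstep _
          have h2 : n - (d+1) + 1 = n - d := by omega
          have h3 : f (f^[n-(d+1)] u) ∈ K := by rw [← h1, h2]; exact hprev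
          have h4 := hstepK (f^[n-(d+1)] u) (hujV _ (by omega)) h3
          refine ⟨h4.1, fun _ => ?_⟩
          rw [h1, h4.2]
      have hallK : ∀ j ≤ n, f^[j] u ∈ K := by
        intro j hj
        have := (hchain (n - j) (by omega)).1
        rwa [show n - (n - j) = j by omega] at this
      have hstepσ : ∀ j < n, f^[j+1] u = σ (f^[j] u) := by
        intro j hj
        have := (hchain (n - j) (by omega)).2 (by omega)
        rwa [show n - (n - j) = j by omega] at this
      -- all iterates lie in the same orbit
      have horbj : ∀ j ≤ n, orb (f^[j] u) = orb u := by
        intro j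
        induction j with
        | zero => intro _; simp
        | succ j ih =>
          intro hj
          rw [hstepσ j (by omega), horbσ _ (hallK j (by omega))]
          exact ih (by omega)
      -- backwards p-iterates of u are cycle elements
      have hpback : ∀ m, ∃ j, j < n ∧ p^[m] u = f^[j] u := by
        intro m
        induction m with
        | zero => exact ⟨0, hn, by simp⟩
        | succ m ih =>
          obtain ⟨j, hj, hjm⟩ := ih
          rw [Function.iterate_succ_apply', hjm]
          rcases Nat.eq_zero_or_pos j with h0 | h0
          · refine ⟨n - 1, by omega, ?_⟩
            have h5 : f^[n] u = σ (f^[n-1] u) := by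
              have := hstepσ (n-1) (by omega)
              rwa [show n - 1 + 1 = n by omega] at this
            have h7 : p (f^[n] u) = f^[n-1] u := by
              rw [h5, (hσ _ (hallK (n-1) (by omega))).2]
            rw [hEq] at h7
            rw [h0, Function.iterate_zero_apply, h7]
          · refine ⟨j - 1, by omega, ?_⟩
            have h5 : f^[j] u = σ (f^[j-1] u) := by
              have := hstepσ (j-1) (by omega)
              rwa [show j - 1 + 1 = j by omega] at this
            rw [h5, (hσ _ (hallK (j-1) (by omega))).2]
      -- the witness of u's block is a cycle element
      have hwtu : wt u ∈ orb u := by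
        have := (hccP u hu).2.1
        rwa [hblkK u hcase] at this
      obtain ⟨hwtK, m, hm⟩ := (horbmem u (wt u)).mp hwtu
      obtain ⟨j, hj, hjw⟩ := hpback m
      -- at that element, f exits K, contradiction
      have hblkj : blk (f^[j] u) = blk u := by
        rw [hblkK _ (hallK j (by omega)), hblkK u hcase, horbj j (by omega)]
      have hwteq : wt (f^[j] u) = wt u :=
        (hcceq _ _ hblkj (hblkB _ (hujV j (by omega)))).2
      have hwit' : f^[j] u = wt (f^[j] u) := by
        rw [hwteq, ← hm, hjw]
      have hfj : f (f^[j] u) = cc (f^[j] u) := hfK1 _ (hallK j (by omega)) hwit'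
      have hccK' : cc (f^[j] u) ∉ K := (hccP _ (hujV j (by omega))).1
      have : f^[j+1] u ∈ K := hallK (j+1) (by omega)
      rw [hstep j, hfj] at this
      exact hccK' this
    · -- the cycle avoids K entirely, hence is a p-cycle : u ∈ K, contradiction
      have hnoKj : ∀ m ≤ n, f^[m] u ∉ K := by
        intro m hm hK'
        exact hcase (hback m hm hK')
      have hpstep : ∀ j < n, p (f^[j+1] u) = f^[j] u := by
        intro j hj
        have hA : A (f^[j] u) (f^[j+1] u) := by
          rw [hstep j]; exact hf1 _ (hujV j (by omega))
        exact (hpuniq _ (hujV (j+1) (by omega)) _ hA).symm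
      have hpit : ∀ m ≤ n, p^[m] u = f^[n-m] u := by
        intro m
        induction m with
        | zero => intro _; simp [hEq]
        | succ m ih =>
          intro hm
          rw [Function.iterate_succ_apply', ih (by omega)]
          have := hpstep (n - (m+1)) (by omega)
          rwa [show n - (m+1) + 1 = n - m by omega] at this
      apply hcase
      refine (hKmem u).mpr ⟨n, hn, ?_, ?_⟩
      · rw [hpit n le_rfl]; simp
      · intro m hm
        rw [hpit m (by omega)]
        exact hujV _ (by omega)
  exact ⟨f, hf1, hf2, hf3⟩

/-- A directed graph (without loops) whose vertices are partitioned into `Vout`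
(out-degree 2, in-degree 1) and `Vin` (in-degree 2, out-degree 1) admits a collection
of vertex-disjoint directed paths, each ending in `Vin`, covering all of `Vout`. -/
theorem path_cover_of_degrees {V : Type*} [Fintype V] [DecidableEq V]
    (A : V → V → Prop) [DecidableRel A] (hloopless : ∀ v, ¬ A v v)
    (Vout Vin : Finset V)
    (hpart : ∀ v : V, (v ∈ Vout ∨ v ∈ Vin) ∧ ¬(v ∈ Vout ∧ v ∈ Vin))
    (hout : ∀ v ∈ Vout, (univ.filter (fun w => A v w)).card = 2 ∧
                        (univ.filter (fun w => A w v)).card = 1)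
    (hin : ∀ v ∈ Vin, (univ.filter (fun w => A v w)).card = 1 ∧
                      (univ.filter (fun w => A w v)).card = 2) :
    ∃ P : Finset (List V),
      (∀ l ∈ P, l ≠ [] ∧ l.Chain' A ∧ l.Nodup ∧ ∃ x, l.getLast? = some x ∧ x ∈ Vin) ∧
      (∀ l ∈ P, ∀ l' ∈ P, l ≠ l' → ∀ v : V, v ∈ l → v ∉ l') ∧
      (∀ v ∈ Vout, ∃ l ∈ P, v ∈ l) := by
  obtain ⟨f, hf1, hf2, hf3⟩ := exists_good_f A hloopless Vout Vin hpart hout hin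
  -- every vertex of Vout eventually leaves Vout under iteration of f
  have hexit : ∀ r ∈ Vout, ∃ k, f^[k] r ∉ Vout := by
    intro r hr
    by_contra hc
    push_neg at hc
    obtain ⟨i, j, hij, hEq⟩ := Finite.exists_ne_map_eq_of_infinite (fun k : ℕ => f^[k] r)
    rcases Nat.lt_or_gt_of_ne hij with h | h
    · exact hf3 (f^[i] r) (hc i) (j - i) (by omega)
        (fun m _ => by rw [← Function.iterate_add_apply]; exact hc _)
        (by rw [← Function.iterate_add_apply]; rw [show j - i + i = j by omega]; exact hEq.symm)
    · exact hf3 (f^[j] r) (hc j) (i - j) (by omega)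
        (fun m _ => by rw [← Function.iterate_add_apply]; exact hc _)
        (by rw [← Function.iterate_add_apply]; rw [show i - j + j = i by omega]; exact hEq)
  classical
  set K0 : V → ℕ := fun r => if h : ∃ k, f^[k] r ∉ Vout then Nat.find h else 0 with hK0
  have hK0spec : ∀ r ∈ Vout, f^[K0 r] r ∉ Vout := by
    intro r hr
    simp only [hK0, dif_pos (hexit r hr)]
    exact Nat.find_spec (hexit r hr)
  have hK0min : ∀ r ∈ Vout, ∀ m < K0 r, f^[m] r ∈ Vout := by
    intro r hr m hm
    simp only [hK0, dif_pos (hexit r hr)] at hm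
    by_contra hc
    exact absurd (Nat.find_min' (hexit r hr) hc) (by omega)
  have hK0le : ∀ r ∈ Vout, ∀ i, (∀ j ≤ i, f^[j] r ∈ Vout) → i < K0 r := by
    intro r hr i hall
    by_contra hc
    exact hK0spec r hr (by have := hall (K0 r) (by omega); exact this)
  set L : V → List V := fun r => (List.range (K0 r + 1)).map (fun j => f^[j] r) with hL
  have hmemL : ∀ r v, v ∈ L r ↔ ∃ j, j ≤ K0 r ∧ f^[j] r = v := by
    intro r v
    simp only [hL, List.mem_map, List.mem_range, Nat.lt_succ_iff]
  set R : Finset V := Vout.filter (fun u => ∀ v ∈ Vout, f v ≠ u) with hR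
  -- key injectivity of the chains
  have key : ∀ i, ∀ j, ∀ r ∈ R, ∀ r' ∈ R, i ≤ K0 r → j ≤ K0 r' →
      f^[i] r = f^[j] r' → r = r' ∧ i = j := by
    intro i
    induction i with
    | zero =>
      intro j r hrR r' hr'R _ hj hEq
      rcases Nat.eq_zero_or_pos j with hj0 | hjpos
      · subst hj0
        simp only [Function.iterate_zero_apply] at hEq
        exact ⟨hEq, rfl⟩
      · exfalso
        simp only [hR, mem_filter] at hrR hr'R
        have h1 : f^[j-1] r' ∈ Vout := hK0min r' hr'R.1 _ (by omega)
        have e1 : f^[j] r' = f (f^[j-1] r') := by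
          conv_lhs => rw [show j = (j-1)+1 by omega]
          rw [Function.iterate_succ_apply']
        have : f (f^[j-1] r') = r := by
          rw [← e1]; simpa using hEq.symm
        exact hrR.2 _ h1 this
    | succ i ih =>
      intro j r hrR r' hr'R hi hj hEq
      rcases Nat.eq_zero_or_pos j with hj0 | hjpos
      · subst hj0
        exfalso
        simp only [hR, mem_filter] at hrR hr'R
        have h1 : f^[i] r ∈ Vout := hK0min r hrR.1 _ (by omega)
        have : f (f^[i] r) = r' := by
          rw [← Function.iterate_succ_apply' f i r]; simpa using hEq
        exact hr'R.2 _ h1 this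
      · have h1 : f^[i] r ∈ Vout := by
          simp only [hR, mem_filter] at hrR; exact hK0min r hrR.1 _ (by omega)
        have h2 : f^[j-1] r' ∈ Vout := by
          simp only [hR, mem_filter] at hr'R; exact hK0min r' hr'R.1 _ (by omega)
        have e1 : f^[j] r' = f (f^[j-1] r') := by
          conv_lhs => rw [show j = (j-1)+1 by omega]
          rw [Function.iterate_succ_apply']
        have hstep : f (f^[i] r) = f (f^[j-1] r') := by
          rw [← Function.iterate_succ_apply' f i r, ← e1]
          exact hEq
        have := hf2 _ h1 _ h2 hstep
        obtain ⟨ha, hb⟩ := ih (j-1) r hrR r' hr'R (by omega) (by omega) this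
        exact ⟨ha, by omega⟩
  -- coverage
  set anc : V → Finset V := fun v =>
    Vout.filter (fun w => ∃ m, f^[m] w = v ∧ ∀ j < m, f^[j] w ∈ Vout) with hanc
  have hself : ∀ v ∈ Vout, v ∈ anc v := by
    intro v hv
    simp only [hanc, mem_filter]
    exact ⟨hv, 0, rfl, by omega⟩
  have cov : ∀ N, ∀ v ∈ Vout, (anc v).card ≤ N →
      ∃ r ∈ R, ∃ i, (∀ j ≤ i, f^[j] r ∈ Vout) ∧ f^[i] r = v := by
    intro N
    induction N with
    | zero =>
      intro v hv hcard
      exact absurd (Finset.card_pos.mpr ⟨v, hself v hv⟩) (by omega)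
    | succ N ih =>
      intro v hv hcard
      by_cases hvR : v ∈ R
      · exact ⟨v, hvR, 0, fun j hj => by simpa [Nat.le_zero.mp hj] using hv, rfl⟩
      · have : ∃ u ∈ Vout, f u = v := by
          simp only [hR, mem_filter] at hvR
          push_neg at hvR
          exact hvR hv
        obtain ⟨u, hu, hfu⟩ := this
        have hsub : anc u ⊆ anc v := by
          intro w hw
          simp only [hanc, mem_filter] at hw ⊢
          obtain ⟨hwV, m, hm1, hm2⟩ := hw
          refine ⟨hwV, m + 1, by rw [Function.iterate_succ_apply', hm1, hfu], ?_⟩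
          intro j hj
          rcases Nat.lt_succ_iff_lt_or_eq.mp hj with h | h
          · exact hm2 j h
          · subst h; rw [hm1]; exact hu
        have hvnot : v ∉ anc u := by
          intro hvin
          simp only [hanc, mem_filter] at hvin
          obtain ⟨_, m, hm1, hm2⟩ := hvin
          refine hf3 v hv (m+1) (by omega) ?_ ?_
          · intro j hj
            rcases Nat.lt_succ_iff_lt_or_eq.mp hj with h | h
            · exact hm2 j h
            · subst h; rw [hm1]; exact hu
          · rw [Function.iterate_succ_apply', hm1, hfu]
        have hlt : (anc u).card < (anc v).card :=
          Finset.card_lt_card (Finset.ssubset_iff_of_subset hsub |>.mpr ⟨v, hself v hv, hvnot⟩)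
        obtain ⟨r, hrR, i, hiall, hiv⟩ := ih u hu (by omega)
        refine ⟨r, hrR, i + 1, ?_, by rw [Function.iterate_succ_apply', hiv, hfu]⟩
        intro j hj
        rcases Nat.lt_succ_iff_lt_or_eq.mp (Nat.lt_succ_of_le hj) with h | h
        · exact hiall j (by omega)
        · subst h; rw [Function.iterate_succ_apply', hiv, hfu]; exact hv
  refine ⟨R.image L, ?_, ?_, ?_⟩
  · intro l hl
    obtain ⟨r, hrR, rfl⟩ := Finset.mem_image.mp hl
    have hrV : r ∈ Vout := (Finset.mem_filter.mp hrR).1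
    refine ⟨by simp [hL], ?_, ?_, ?_⟩
    · -- chain'
      rw [hL]
      unfold List.Chain'
      rw [List.isChain_map]
      rw [List.isChain_range_succ]
      intro m hm
      rw [Function.iterate_succ_apply']
      exact hf1 _ (hK0min r hrV m hm)
    · -- nodup
      rw [hL]
      refine List.Nodup.map_on ?_ List.nodup_range
      intro x hx y hy hxy
      simp only [List.mem_range, Nat.lt_succ_iff] at hx hy
      exact (key x y r hrR r hrR hx hy hxy).2
    · refine ⟨f^[K0 r] r, ?_, ?_⟩
      · rw [hL]
        show ((List.range (K0 r + 1)).map (fun j => f^[j] r)).getLast? = _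
        rw [List.range_succ, List.map_append]
        simp
      · have h1 := hK0spec r hrV
        rcases (hpart (f^[K0 r] r)).1 with h | h
        · exact absurd h h1
        · exact h
  · intro l hl l' hl' hne v hv hv'
    obtain ⟨r, hrR, rfl⟩ := Finset.mem_image.mp hl
    obtain ⟨r', hr'R, rfl⟩ := Finset.mem_image.mp hl'
    obtain ⟨i, hi, hiv⟩ := (hmemL r v).mp hv
    obtain ⟨j, hj, hjv⟩ := (hmemL r' v).mp hv'
    have := key i j r hrR r' hr'R hi hj (by rw [hiv, hjv])
    exact hne (by rw [this.1])
  · intro v hv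
    obtain ⟨r, hrR, i, hiall, hiv⟩ := cov (anc v).card v hv le_rfl
    have hrV : r ∈ Vout := (Finset.mem_filter.mp hrR).1
    refine ⟨L r, Finset.mem_image_of_mem L hrR, ?_⟩
    exact (hmemL r v).mpr ⟨i, le_of_lt (hK0le r hrV i hiall), hiv⟩
end

section
/- Let M be an SNP matrix with no duplicate rows, and let M' be obtained by duplicating each row of M. Then LHR(M') = 2·SH-LHR(M): the maximum total length of two haplotypes obtainable from M' equals twice the maximum length of a single haplotype obtainable from M. -/
open Finset

/-- Two rows conflict if in some column they carry differing non-hole values. -/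
def Conflict {m : ℕ} (r1 r2 : Row m) : Prop :=
  ∃ j : Fin m, ∃ b1 b2 : Bool, r1 j = some b1 ∧ r2 j = some b2 ∧ b1 ≠ b2

/-- A multiset of rows is mutually non-conflicting. -/
def PairwiseNC {m : ℕ} (S : Multiset (Row m)) : Prop :=
  ∀ r1 ∈ S, ∀ r2 ∈ S, ¬ Conflict r1 r2

open scoped Classical in
/-- The length of the haplotype obtained by merging the rows of `S`: the number of
columns at which some row of `S` has a non-hole value. -/
noncomputable def mergedLen {m : ℕ} (S : Multiset (Row m)) : ℕ :=
  (univ.filter (fun j => ∃ r ∈ S, r j ≠ none)).card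

/-- SH-LHR(M): the maximum length of a single haplotype obtainable by removing rows
of `M` so that the remaining rows are mutually non-conflicting, then merging them. -/
noncomputable def SHLHR {m : ℕ} (M : Multiset (Row m)) : ℕ :=
  sSup {v : ℕ | ∃ S ≤ M, PairwiseNC S ∧ mergedLen S = v}

/-- LHR(M): the maximum of |H₁| + |H₂| over ways of removing rows of `M` and
partitioning the remaining rows into two mutually non-conflicting sets. -/
noncomputable def LHR {m : ℕ} (M : Multiset (Row m)) : ℕ :=
  sSup {v : ℕ | ∃ S1 S2 : Multiset (Row m), S1 + S2 ≤ M ∧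
    PairwiseNC S1 ∧ PairwiseNC S2 ∧ mergedLen S1 + mergedLen S2 = v}


open scoped Classical in
lemma mergedLen_le_card {m : ℕ} (S : Multiset (Row m)) : mergedLen S ≤ m := by
  classical
  have := Finset.card_filter_le (univ : Finset (Fin m))
    (fun j => ∃ r ∈ S, r j ≠ none)
  simpa [mergedLen] using this

lemma mergedLen_congr {m : ℕ} {S T : Multiset (Row m)}
    (h : ∀ r, r ∈ S ↔ r ∈ T) : mergedLen S = mergedLen T := by
  classical
  unfold mergedLen
  congr 1
  apply Finset.filter_congr
  intro j _
  constructor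
  · rintro ⟨r, hr, hj⟩; exact ⟨r, (h r).1 hr, hj⟩
  · rintro ⟨r, hr, hj⟩; exact ⟨r, (h r).2 hr, hj⟩

/-- For an SNP matrix `M` with no duplicate rows, duplicating each row gives a matrix
`M'` with LHR(M') = 2 · SH-LHR(M). -/
theorem LHR_double_eq_two_mul_SHLHR {m : ℕ} (M : Multiset (Row m)) (hnd : M.Nodup) :
    LHR (2 • M) = 2 * SHLHR M := by
  classical
  set A := {v : ℕ | ∃ S ≤ M, PairwiseNC S ∧ mergedLen S = v} with hA
  set B := {v : ℕ | ∃ S1 S2 : Multiset (Row m), S1 + S2 ≤ 2 • M ∧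
    PairwiseNC S1 ∧ PairwiseNC S2 ∧ mergedLen S1 + mergedLen S2 = v} with hB
  have hneA : A.Nonempty := ⟨mergedLen (0 : Multiset (Row m)),
    0, (zero_le : (0 : Multiset (Row m)) ≤ M), by intro r hr; simp at hr, rfl⟩
  have hbddA : BddAbove A := by
    refine ⟨m, ?_⟩
    rintro v ⟨S, -, -, rfl⟩
    exact mergedLen_le_card S
  have hneB : B.Nonempty := ⟨mergedLen (0 : Multiset (Row m)) + mergedLen (0 : Multiset (Row m)),
    0, 0, by simp, by intro r hr; simp at hr, by intro r hr; simp at hr, rfl⟩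
  have hbddB : BddAbove B := by
    refine ⟨2 * m, ?_⟩
    rintro v ⟨S1, S2, -, -, -, rfl⟩
    have := add_le_add (mergedLen_le_card S1) (mergedLen_le_card S2)
    omega
  have hLHR : LHR (2 • M) = sSup B := rfl
  have hSH : SHLHR M = sSup A := rfl
  refine le_antisymm ?_ ?_
  · rw [hLHR]
    refine csSup_le hneB ?_
    rintro v ⟨S1, S2, hle, h1, h2, rfl⟩
    have hmem : ∀ (S : Multiset (Row m)), S ≤ S1 + S2 → ∀ r ∈ S, r ∈ M := by
      intro S hS r hr
      have : r ∈ 2 • M := Multiset.mem_of_le (le_trans hS hle) hr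
      rw [two_nsmul] at this
      rcases Multiset.mem_add.1 this with h | h <;> exact h
    have key : ∀ (S : Multiset (Row m)), S ≤ S1 + S2 → PairwiseNC S →
        mergedLen S ≤ SHLHR M := by
      intro S hS hNC
      have hded : S.dedup ≤ M := by
        rw [Multiset.le_iff_subset (Multiset.nodup_dedup S)]
        intro r hr
        exact hmem S hS r (Multiset.mem_dedup.1 hr)
      have hNCd : PairwiseNC S.dedup := by
        intro r1 h1' r2 h2'
        exact hNC r1 (Multiset.mem_dedup.1 h1') r2 (Multiset.mem_dedup.1 h2')
      have heq : mergedLen S = mergedLen S.dedup :=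
        mergedLen_congr (fun r => (Multiset.mem_dedup).symm)
      rw [hSH, heq]
      exact le_csSup hbddA ⟨S.dedup, hded, hNCd, rfl⟩
    have k1 := key S1 (Multiset.le_add_right _ _) h1
    have k2 := key S2 (Multiset.le_add_left _ _) h2
    omega
  · have hmemA : sSup A ∈ A := Nat.sSup_mem hneA hbddA
    obtain ⟨S, hSM, hNC, hval⟩ := hmemA
    rw [hSH, hLHR]
    have : mergedLen S + mergedLen S ∈ B := by
      refine ⟨S, S, ?_, hNC, hNC, rfl⟩
      rw [two_nsmul]
      exact add_le_add hSM hSM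
    have hle := le_csSup hbddB this
    omega
end

section
/- In the matrix M constructed from an oriented cubic graph (every column containing exactly one 1 and exactly one 0, every row exactly 3 non-hole entries), any set of r mutually non-conflicting rows merges into a haplotype of length exactly 3r; consequently SH-LHR(M) = 3·α(G), where α(G) is the maximum size of an independent set of G. -/
open Finset

open scoped Classical in
/-- In the independent-set reduction matrix (rows indexed by vertices of an oriented
cubic graph; each row has exactly 3 non-hole entries; each column contains exactly one
1 and exactly one 0): any set of `r` mutually non-conflicting rows merges into a
haplotype of length exactly `3r`, and consequently SH-LHR(M) = 3·α(G). -/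
theorem SHLHR_eq_three_mul_indep {V C : Type*} [Fintype V] [Fintype C] [DecidableEq V]
    (G : SimpleGraph V) (D : Finset (V × V))
    (hD : ∀ p ∈ D, G.Adj p.1 p.2)
    (hadj : ∀ u v : V, G.Adj u v → (u, v) ∈ D ∨ (v, u) ∈ D)
    (col : V → Finset C)
    (hdisj : ∀ u v : V, u ≠ v → Disjoint (col u) (col v))
    (M : V → C → Option Bool)
    (hT : ∀ v : V, ∀ c : C, (M v c = some true ↔ c ∈ col v))
    (hF : ∀ u : V, ∀ c : C, M u c = some false → ∃ w : V, (u, w) ∈ D ∧ c ∈ col w)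
    (hF' : ∀ u w : V, (u, w) ∈ D → ∃ c ∈ col w, M u c = some false)
    (hrow3 : ∀ v : V, (univ.filter (fun c => M v c ≠ none)).card = 3)
    (hcolT : ∀ c : C, ∃! v : V, M v c = some true)
    (hcolF : ∀ c : C, ∃! v : V, M v c = some false) :
    (∀ S : Finset V,
      (∀ u ∈ S, ∀ v ∈ S,
          ¬ ∃ c : C, ∃ b1 b2 : Bool, M u c = some b1 ∧ M v c = some b2 ∧ b1 ≠ b2) →
      (univ.filter (fun c => ∃ v ∈ S, M v c ≠ none)).card = 3 * S.card) ∧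
    sSup {v : ℕ | ∃ S : Finset V,
        (∀ u ∈ S, ∀ w ∈ S,
          ¬ ∃ c : C, ∃ b1 b2 : Bool, M u c = some b1 ∧ M w c = some b2 ∧ b1 ≠ b2) ∧
        (univ.filter (fun c => ∃ v ∈ S, M v c ≠ none)).card = v}
      = 3 * sSup {n : ℕ | ∃ S : Finset V, (∀ u ∈ S, ∀ w ∈ S, ¬ G.Adj u w) ∧ S.card = n} := by
  classical
  -- Part 1: merged haplotype length
  have key : ∀ S : Finset V,
      (∀ u ∈ S, ∀ v ∈ S,
          ¬ ∃ c : C, ∃ b1 b2 : Bool, M u c = some b1 ∧ M v c = some b2 ∧ b1 ≠ b2) →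
      (univ.filter (fun c => ∃ v ∈ S, M v c ≠ none)).card = 3 * S.card := by
    intro S hS
    have hset : (univ.filter (fun c => ∃ v ∈ S, M v c ≠ none))
        = S.biUnion (fun v => univ.filter (fun c => M v c ≠ none)) := by
      ext c
      simp only [mem_filter, mem_biUnion, mem_univ, true_and]
    rw [hset, Finset.card_biUnion]
    · rw [Finset.sum_congr rfl (fun v _ => hrow3 v), Finset.sum_const, smul_eq_mul,
        mul_comm]
    · intro u hu v hv huv
      rw [Function.onFun, Finset.disjoint_left]
      intro c hcu hcv
      simp only [mem_filter, mem_univ, true_and] at hcu hcv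
      obtain ⟨b1, hb1⟩ := Option.ne_none_iff_exists'.mp hcu
      obtain ⟨b2, hb2⟩ := Option.ne_none_iff_exists'.mp hcv
      by_cases hbb : b1 = b2
      · subst hbb
        cases b1 with
        | true => exact huv ((hcolT c).unique hb1 hb2)
        | false => exact huv ((hcolF c).unique hb1 hb2)
      · exact hS u hu v hv ⟨c, b1, b2, hb1, hb2, hbb⟩
  refine ⟨key, ?_⟩
  -- noncf ↔ indep
  have indep_of_ncf : ∀ S : Finset V,
      (∀ u ∈ S, ∀ w ∈ S,
          ¬ ∃ c : C, ∃ b1 b2 : Bool, M u c = some b1 ∧ M w c = some b2 ∧ b1 ≠ b2) →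
      (∀ u ∈ S, ∀ w ∈ S, ¬ G.Adj u w) := by
    intro S hS u hu w hw hadj'
    rcases hadj u w hadj' with hmem | hmem
    · obtain ⟨c, hc, hMc⟩ := hF' u w hmem
      exact hS u hu w hw ⟨c, false, true, hMc, (hT w c).mpr hc, by simp⟩
    · obtain ⟨c, hc, hMc⟩ := hF' w u hmem
      exact hS u hu w hw ⟨c, true, false, (hT u c).mpr hc, hMc, by simp⟩
  have ncf_of_indep : ∀ S : Finset V,
      (∀ u ∈ S, ∀ w ∈ S, ¬ G.Adj u w) →
      (∀ u ∈ S, ∀ w ∈ S,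
          ¬ ∃ c : C, ∃ b1 b2 : Bool, M u c = some b1 ∧ M w c = some b2 ∧ b1 ≠ b2) := by
    intro S hind u hu w hw ⟨c, b1, b2, h1, h2, hne⟩
    -- wlog b1 = true, b2 = false
    have main : ∀ x ∈ S, ∀ y ∈ S, M x c = some true → M y c = some false → False := by
      intro x hx y hy hxT hyF
      have hcx : c ∈ col x := (hT x c).mp hxT
      obtain ⟨z, hzD, hcz⟩ := hF y c hyF
      have hxz : x = z := by
        by_contra hxz
        exact Finset.disjoint_left.mp (hdisj x z hxz) hcx hcz
      subst hxz
      exact hind x hx y hy (hD _ hzD).symm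
    cases b1 with
    | true =>
      cases b2 with
      | true => exact hne rfl
      | false => exact main u hu w hw h1 h2
    | false =>
      cases b2 with
      | true => exact main w hw u hu h2 h1
      | false => exact hne rfl
  -- sets
  set A : Set ℕ := {n : ℕ | ∃ S : Finset V, (∀ u ∈ S, ∀ w ∈ S, ¬ G.Adj u w) ∧ S.card = n}
    with hA
  set B : Set ℕ := {v : ℕ | ∃ S : Finset V,
        (∀ u ∈ S, ∀ w ∈ S,
          ¬ ∃ c : C, ∃ b1 b2 : Bool, M u c = some b1 ∧ M w c = some b2 ∧ b1 ≠ b2) ∧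
        (univ.filter (fun c => ∃ v ∈ S, M v c ≠ none)).card = v} with hB
  have hAne : A.Nonempty := ⟨0, ∅, by simp⟩
  have hAbdd : BddAbove A := by
    refine ⟨Fintype.card V, ?_⟩
    rintro n ⟨S, _, rfl⟩
    exact Finset.card_le_card (Finset.subset_univ S) |>.trans_eq (by simp)
  have hBbdd : BddAbove B := by
    refine ⟨Fintype.card C, ?_⟩
    rintro n ⟨S, _, rfl⟩
    exact Finset.card_le_card (Finset.filter_subset _ _) |>.trans_eq (by simp)
  have hmA : sSup A ∈ A := Nat.sSup_mem hAne hAbdd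
  obtain ⟨S0, hS0ind, hS0card⟩ := hmA
  have hS0ncf := ncf_of_indep S0 hS0ind
  have h1 : 3 * sSup A ≤ sSup B := by
    apply le_csSup hBbdd
    exact ⟨S0, hS0ncf, by rw [key S0 hS0ncf, hS0card]⟩
  have h2 : sSup B ≤ 3 * sSup A := by
    have hBne : B.Nonempty := ⟨3 * sSup A, ⟨S0, hS0ncf, by rw [key S0 hS0ncf, hS0card]⟩⟩
    apply csSup_le hBne
    rintro n ⟨S, hSncf, rfl⟩
    rw [key S hSncf]
    exact Nat.mul_le_mul_left 3 (le_csSup hAbdd ⟨S, indep_of_ncf S hSncf, rfl⟩)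
  exact le_antisymm h2 h1
end

section
/- Let G=(V,E) be a graph, k=2|E||V|, and let M be the (2k|V|+|E|)×2|V| SNP matrix of the MAX-CUT reduction. Then the minimum number of flips making M feasible equals |E|(|V|-2) + 2(|E|-t), where t is the maximum cut size of G. -/
open Finset

/-- Columns of the MAX-CUT reduction matrix: each vertex `i` gets two columns
`(i, false)` (column 2i-1) and `(i, true)` (column 2i). -/
abbrev Col (V : Type*) := V × Bool

/-- A row of `M₀`: 0s in the two columns of vertex `i`, holes elsewhere. -/
def row0 {V : Type*} [DecidableEq V] (i : V) : Col V → Option Bool :=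
  fun p => if p.1 = i then some false else none

/-- A row of `M₁`: 1s in the two columns of vertex `i`, holes elsewhere. -/
def row1 {V : Type*} [DecidableEq V] (i : V) : Col V → Option Bool :=
  fun p => if p.1 = i then some true else none

/-- A row of `M_G` for the edge `{i,j}` with `i < j`: 0s in both columns of `i`,
1s in both columns of `j`, and for every other vertex `h` a 0 in column `(h,false)`
and a 1 in column `(h,true)`. -/
def rowG {V : Type*} [DecidableEq V] (i j : V) : Col V → Option Bool :=
  fun p => if p.1 = i then some false else if p.1 = j then some true else some p.2

/-- Row indices of the reduction matrix: `k` copies of each `M₀`-row and of each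
`M₁`-row, plus one row per edge of `G` (as an ordered pair with smaller endpoint first). -/
abbrev RowIdx {V : Type*} [Fintype V] [LinearOrder V]
    (G : SimpleGraph V) [DecidableRel G.Adj] (k : ℕ) :=
  (Fin k × (V ⊕ V)) ⊕ {q : V × V // q.1 < q.2 ∧ G.Adj q.1 q.2}

/-- The MAX-CUT reduction matrix. -/
def redM {V : Type*} [Fintype V] [LinearOrder V]
    (G : SimpleGraph V) [DecidableRel G.Adj] (k : ℕ) :
    RowIdx G k → Col V → Option Bool
  | Sum.inl (_, Sum.inl i) => row0 i
  | Sum.inl (_, Sum.inr i) => row1 i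
  | Sum.inr q => rowG q.1.1 q.1.2

/-- The minimum number of flips (changes of non-hole entries, preserving the hole
pattern) turning `M` into a feasible matrix, i.e. one all of whose rows fit one of two
haplotypes. -/
noncomputable def minFlips {ι C : Type*} [Fintype ι] [Fintype C]
    (M : ι → C → Option Bool) : ℕ :=
  sInf {s : ℕ | ∃ N : ι → C → Option Bool,
    (∀ i c, (N i c = none ↔ M i c = none)) ∧
    (∃ H1 H2 : C → Bool, ∀ i,
      (∀ c b, N i c = some b → b = H1 c) ∨ (∀ c b, N i c = some b → b = H2 c)) ∧
    (∑ i, (univ.filter (fun c => N i c ≠ M i c)).card) = s}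

/-- MAX-CUT of `G`. -/
noncomputable def maxCut {V : Type*} [Fintype V] [LinearOrder V]
    (G : SimpleGraph V) [DecidableRel G.Adj] : ℕ :=
  sSup {n : ℕ | ∃ S : Finset V,
    ((univ.filter (fun q : V × V =>
        q.1 < q.2 ∧ G.Adj q.1 q.2 ∧ ¬(q.1 ∈ S ↔ q.2 ∈ S))).card) = n}

/-! ### Auxiliary machinery -/

set_option linter.unusedSectionVars false

def rcost {C : Type*} [Fintype C] (H : C → Bool) (r : C → Option Bool) : ℕ :=
  (univ.filter (fun c => r c ≠ none ∧ r c ≠ some (H c))).card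

lemma flips_eq_rcost {C : Type*} [Fintype C] (r n : C → Option Bool) (H : C → Bool)
    (hh : ∀ c, n c = none ↔ r c = none) (hf : ∀ c b, n c = some b → b = H c) :
    (univ.filter (fun c => n c ≠ r c)).card = rcost H r := by
  unfold rcost
  congr 1
  apply filter_congr
  intro c _
  cases hr : r c with
  | none =>
    have : n c = none := (hh c).mpr hr
    simp [this, hr]
  | some b =>
    cases hn : n c with
    | none => exact absurd ((hh c).mp hn) (by simp [hr])
    | some b' =>
      have hb' := hf c b' hn
      subst hb'
      simp only [hn, hr, ne_eq, Option.some.injEq, reduceCtorEq, not_false_eq_true, true_and]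
      constructor
      · intro h h2; exact h h2.symm
      · intro h h2; exact h h2.symm

section RowLemmas

variable {V : Type*} [Fintype V] [DecidableEq V]

lemma rcost_row0 (H : Col V → Bool) (i : V) (h : ∀ b, H (i, b) = false) :
    rcost H (row0 i) = 0 := by
  unfold rcost
  rw [card_eq_zero, filter_eq_empty_iff]
  rintro ⟨v, b⟩ -
  by_cases hv : v = i <;> simp [row0, hv, h]

lemma rcost_row1 (H : Col V → Bool) (i : V) (h : ∀ b, H (i, b) = true) :
    rcost H (row1 i) = 0 := by
  unfold rcost
  rw [card_eq_zero, filter_eq_empty_iff]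
  rintro ⟨v, b⟩ -
  by_cases hv : v = i <;> simp [row1, hv, h]

lemma one_le_rcost_row0 (H : Col V → Bool) (i : V) (b : Bool) (h : H (i, b) = true) :
    1 ≤ rcost H (row0 i) := by
  rw [Nat.succ_le_iff]
  unfold rcost
  rw [card_pos]
  exact ⟨(i, b), by simp [row0, h]⟩

lemma one_le_rcost_row1 (H : Col V → Bool) (i : V) (b : Bool) (h : H (i, b) = false) :
    1 ≤ rcost H (row1 i) := by
  rw [Nat.succ_le_iff]
  unfold rcost
  rw [card_pos]
  exact ⟨(i, b), by simp [row1, h]⟩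

lemma rcost_rowG (χ : V → Bool) (i j : V) (hij : i ≠ j) :
    rcost (fun c => χ c.1) (rowG i j) =
      (Fintype.card V - 2) + ((if χ i then 2 else 0) + (if χ j then 0 else 2)) := by
  unfold rcost rowG
  rw [Finset.card_filter, Fintype.sum_prod_type]
  have key : ∀ h : V,
      (∑ b : Bool, if ((if h = i then some false else if h = j then some true else some b) ≠ none
          ∧ (if h = i then some false else if h = j then some true else some b) ≠ some (χ h))
        then 1 else 0)
      = (if h = i then (if χ i then 2 else 0) else if h = j then (if χ j then 0 else 2) else 1) := by
    intro h
    by_cases h1 : h = i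
    · subst h1
      cases hc : χ h <;> simp [hc]
    · by_cases h2 : h = j
      · subst h2
        cases hc : χ h <;> simp [h1, hc]
      · cases hc : χ h <;> simp [h1, h2, hc]
  rw [Finset.sum_congr rfl (fun h _ => key h)]
  rw [← Finset.sum_sdiff (Finset.subset_univ ({i, j} : Finset V))]
  rw [Finset.sum_pair hij]
  have hdiff : ∀ h ∈ univ \ ({i, j} : Finset V),
      (if h = i then (if χ i then 2 else 0) else if h = j then (if χ j then 0 else 2) else 1) = 1 := by
    intro h hh
    simp only [mem_sdiff, mem_univ, mem_insert, mem_singleton, true_and] at hh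
    push_neg at hh
    simp [hh.1, hh.2]
  rw [Finset.sum_congr rfl hdiff, Finset.sum_const, smul_eq_mul, mul_one]
  rw [card_sdiff_of_subset (Finset.subset_univ _), card_pair hij, card_univ]
  simp [hij, Ne.symm hij]

lemma rcost_rowG_best (χ : V → Bool) (i j : V) (hij : i ≠ j) :
    rcost (if χ i then (fun c : Col V => !χ c.1) else (fun c : Col V => χ c.1)) (rowG i j)
      = (Fintype.card V - 2) + (if χ i = χ j then 2 else 0) := by
  cases hi : χ i
  · rw [if_neg (by simp [hi]), rcost_rowG χ i j hij]
    cases hj : χ j <;> simp [hi, hj]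
  · rw [if_pos (by simp [hi]), rcost_rowG (fun h => !χ h) i j hij]
    cases hj : χ j <;> simp [hi, hj]

lemma rcost_rowG_lb (χ : V → Bool) (i j : V) (hij : i ≠ j) (H : Col V → Bool)
    (hH : H = (fun c : Col V => χ c.1) ∨ H = (fun c : Col V => !χ c.1)) :
    (Fintype.card V - 2) + (if χ i = χ j then 2 else 0) ≤ rcost H (rowG i j) := by
  rcases hH with rfl | rfl
  · rw [rcost_rowG χ i j hij]
    cases hi : χ i <;> cases hj : χ j <;> simp [hi, hj]
  · rw [rcost_rowG (fun h => !χ h) i j hij]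
    cases hi : χ i <;> cases hj : χ j <;> simp [hi, hj]

end RowLemmas

section CutLemmas

variable {V : Type*} [Fintype V] [LinearOrder V]

lemma sum_edge_cut (G : SimpleGraph V) [DecidableRel G.Adj] (χ : V → Bool) :
    (∑ e : {q : V × V // q.1 < q.2 ∧ G.Adj q.1 q.2},
      ((Fintype.card V - 2) + (if χ e.1.1 = χ e.1.2 then 2 else 0)))
    = (univ.filter (fun q : V × V => q.1 < q.2 ∧ G.Adj q.1 q.2)).card * (Fintype.card V - 2)
      + 2 * ((univ.filter (fun q : V × V => q.1 < q.2 ∧ G.Adj q.1 q.2)).card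
          - (univ.filter (fun q : V × V =>
              q.1 < q.2 ∧ G.Adj q.1 q.2 ∧ ¬(χ q.1 = χ q.2))).card) := by
  rw [← Finset.sum_subtype (univ.filter fun q : V × V => q.1 < q.2 ∧ G.Adj q.1 q.2)
      (by simp) (fun q : V × V => (Fintype.card V - 2) + (if χ q.1 = χ q.2 then 2 else 0))]
  set E := univ.filter fun q : V × V => q.1 < q.2 ∧ G.Adj q.1 q.2 with hE
  rw [Finset.sum_add_distrib, Finset.sum_const, smul_eq_mul]
  congr 1
  have h1 : (∑ q ∈ E, if χ q.1 = χ q.2 then 2 else 0)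
      = ∑ q ∈ E.filter (fun q => χ q.1 = χ q.2), (2 : ℕ) :=
    (Finset.sum_filter _ _).symm
  have h2 := Finset.card_filter_add_card_filter_not (s := E)
      (p := fun q : V × V => χ q.1 = χ q.2)
  have h3 : E.filter (fun q : V × V => ¬(χ q.1 = χ q.2))
      = univ.filter (fun q : V × V => q.1 < q.2 ∧ G.Adj q.1 q.2 ∧ ¬(χ q.1 = χ q.2)) := by
    rw [hE, Finset.filter_filter]
    apply Finset.filter_congr
    intro q _
    tauto
  rw [h1, Finset.sum_const, smul_eq_mul, ← h3]
  omega

lemma maxCut_facts (G : SimpleGraph V) [DecidableRel G.Adj] :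
    (∃ S : Finset V, ((univ.filter (fun q : V × V =>
        q.1 < q.2 ∧ G.Adj q.1 q.2 ∧ ¬(q.1 ∈ S ↔ q.2 ∈ S))).card) = maxCut G)
    ∧ ∀ S : Finset V, ((univ.filter (fun q : V × V =>
        q.1 < q.2 ∧ G.Adj q.1 q.2 ∧ ¬(q.1 ∈ S ↔ q.2 ∈ S))).card) ≤ maxCut G := by
  have hbdd : BddAbove {n : ℕ | ∃ S : Finset V,
      ((univ.filter (fun q : V × V =>
        q.1 < q.2 ∧ G.Adj q.1 q.2 ∧ ¬(q.1 ∈ S ↔ q.2 ∈ S))).card) = n} := by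
    refine ⟨(univ.filter (fun q : V × V => q.1 < q.2 ∧ G.Adj q.1 q.2)).card, ?_⟩
    rintro n ⟨S, rfl⟩
    apply Finset.card_le_card
    intro q hq
    simp only [mem_filter] at *
    exact ⟨hq.1, hq.2.1, hq.2.2.1⟩
  have hne : {n : ℕ | ∃ S : Finset V,
      ((univ.filter (fun q : V × V =>
        q.1 < q.2 ∧ G.Adj q.1 q.2 ∧ ¬(q.1 ∈ S ↔ q.2 ∈ S))).card) = n}.Nonempty :=
    ⟨_, ∅, rfl⟩
  constructor
  · have hmem := Nat.sSup_mem hne hbdd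
    simp only [Set.mem_setOf_eq] at hmem
    exact hmem
  · intro S
    apply le_csSup hbdd
    exact Set.mem_setOf_eq ▸ ⟨S, rfl⟩

lemma total_sum {ι κ : Type*} [Fintype ι] [Fintype κ] {k : ℕ} (f : (Fin k × ι) ⊕ κ → ℕ) :
    ∑ r, f r = (∑ a : Fin k, ∑ v : ι, f (Sum.inl (a, v))) + ∑ e : κ, f (Sum.inr e) := by
  rw [Fintype.sum_sum_type, Fintype.sum_prod_type]

end CutLemmas

/-- MAX-CUT reduction: with `k = 2|E||V|`, the minimum number of flips making the
reduction matrix feasible equals `|E|(|V|-2) + 2(|E|-t)` where `t` is the maximum cut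
size of `G`. -/
theorem minFlips_redM_eq {V : Type*} [Fintype V] [LinearOrder V]
    (G : SimpleGraph V) [DecidableRel G.Adj] (k nE nV t : ℕ)
    (hnE : nE = (univ.filter (fun q : V × V => q.1 < q.2 ∧ G.Adj q.1 q.2)).card)
    (hnV : nV = Fintype.card V)
    (hk : k = 2 * nE * nV)
    (ht : t = maxCut G) :
    minFlips (redM G k) = nE * (nV - 2) + 2 * (nE - t) := by
  classical
  obtain ⟨⟨S₀, hS₀⟩, hle⟩ := maxCut_facts G
  subst hk hnE hnV ht
  set n := Fintype.card V with hn
  set nE := (univ.filter (fun q : V × V => q.1 < q.2 ∧ G.Adj q.1 q.2)).card with hnE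
  set K := 2 * nE * n with hK
  -- the cut selector for the upper bound
  set χ : V → Bool := fun h => decide (h ∈ S₀) with hχ
  set H1 : Col V → Bool := fun c => χ c.1 with hH1
  set H2 : Col V → Bool := fun c => !χ c.1 with hH2
  set Hc : RowIdx G K → Col V → Bool := fun r =>
    match r with
    | Sum.inl (_, Sum.inl i) => if χ i then H2 else H1
    | Sum.inl (_, Sum.inr i) => if χ i then H1 else H2
    | Sum.inr q => if χ q.1.1 then H2 else H1
    with hHc
  set N : RowIdx G K → Col V → Option Bool :=
    fun r c => (redM G K r c).map (fun _ => Hc r c) with hN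
  have hhole : ∀ r c, N r c = none ↔ redM G K r c = none := by
    intro r c; simp [hN, Option.map_eq_none_iff]
  have hfitc : ∀ r c b, N r c = some b → b = Hc r c := by
    intro r c b h
    simp only [hN, Option.map_eq_some_iff] at h
    obtain ⟨a, -, h⟩ := h
    exact h.symm
  have hHcor : ∀ r, Hc r = H1 ∨ Hc r = H2 := by
    intro r
    rcases r with ⟨a, i | i⟩ | q
    · by_cases h : χ i = true <;> simp [hHc, h]
    · by_cases h : χ i = true <;> simp [hHc, h]
    · by_cases h : χ q.1.1 = true <;> simp [hHc, h]
  have hfit : ∀ r, (∀ c b, N r c = some b → b = H1 c) ∨ (∀ c b, N r c = some b → b = H2 c) := by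
    intro r
    rcases hHcor r with h | h
    · left; intro c b hb; rw [hfitc r c b hb, h]
    · right; intro c b hb; rw [hfitc r c b hb, h]
  have hval : (∑ r, (univ.filter (fun c => N r c ≠ redM G K r c)).card)
      = nE * (n - 2) + 2 * (nE - maxCut G) := by
    have h1 : ∀ r, (univ.filter (fun c => N r c ≠ redM G K r c)).card
        = rcost (Hc r) (redM G K r) :=
      fun r => flips_eq_rcost _ _ _ (hhole r) (hfitc r)
    rw [Finset.sum_congr rfl (fun r _ => h1 r)]
    rw [total_sum (fun r => rcost (Hc r) (redM G K r))]
    have hleft : (∑ a : Fin K, ∑ v : V ⊕ V,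
        rcost (Hc (Sum.inl (a, v))) (redM G K (Sum.inl (a, v)))) = 0 := by
      apply Finset.sum_eq_zero
      intro a _
      apply Finset.sum_eq_zero
      intro v _
      rcases v with i | i
      · show rcost (if χ i then H2 else H1) (row0 i) = 0
        by_cases h : χ i = true
        · rw [if_pos h]
          exact rcost_row0 _ _ (fun b => by simp [hH2, h])
        · rw [if_neg h]
          exact rcost_row0 _ _ (fun b => by simp [hH1]; exact Bool.not_eq_true _ |>.mp h)
      · show rcost (if χ i then H1 else H2) (row1 i) = 0
        by_cases h : χ i = true
        · rw [if_pos h]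
          exact rcost_row1 _ _ (fun b => by simp [hH1, h])
        · rw [if_neg h]
          exact rcost_row1 _ _ (fun b => by simp [hH2]; exact Bool.not_eq_true _ |>.mp h)
    have hright : (∑ e : {q : V × V // q.1 < q.2 ∧ G.Adj q.1 q.2},
        rcost (Hc (Sum.inr e)) (redM G K (Sum.inr e)))
        = nE * (n - 2) + 2 * (nE - maxCut G) := by
      have hterm : ∀ e : {q : V × V // q.1 < q.2 ∧ G.Adj q.1 q.2},
          rcost (Hc (Sum.inr e)) (redM G K (Sum.inr e))
          = (n - 2) + (if χ e.1.1 = χ e.1.2 then 2 else 0) := by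
        intro e
        have hij : e.1.1 ≠ e.1.2 := ne_of_lt e.2.1
        exact rcost_rowG_best χ e.1.1 e.1.2 hij
      rw [Finset.sum_congr rfl (fun e _ => hterm e), sum_edge_cut G χ]
      have hcuteq : (univ.filter (fun q : V × V =>
          q.1 < q.2 ∧ G.Adj q.1 q.2 ∧ ¬(χ q.1 = χ q.2))).card = maxCut G := by
        rw [← hS₀]
        congr 1
        apply Finset.filter_congr
        intro q _
        simp [hχ, decide_eq_decide]
      rw [hcuteq]
    rw [hleft, hright, Nat.zero_add]
  unfold minFlips
  apply le_antisymm
  · exact Nat.sInf_le ⟨N, hhole, ⟨H1, H2, hfit⟩, hval⟩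
  · refine le_csInf ⟨_, ⟨N, hhole, ⟨H1, H2, hfit⟩, hval⟩⟩ ?_
    rintro s ⟨N', hh', ⟨Ha, Hb, hf'⟩, rfl⟩
    have hch : ∀ r, ∃ H : Col V → Bool, (H = Ha ∨ H = Hb) ∧
        ∀ c b, N' r c = some b → b = H c := by
      intro r
      rcases hf' r with h | h
      exacts [⟨Ha, Or.inl rfl, h⟩, ⟨Hb, Or.inr rfl, h⟩]
    choose Hc' hc1 hc2 using hch
    have hflips : ∀ r, (univ.filter (fun c => N' r c ≠ redM G K r c)).card
        = rcost (Hc' r) (redM G K r) :=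
      fun r => flips_eq_rcost _ _ _ (hh' r) (hc2 r)
    rw [Finset.sum_congr rfl (fun r _ => hflips r)]
    by_cases hE0 : nE = 0
    · simp [hE0]
    · have hn2 : 2 ≤ n := by
        have hpos0 : 0 < (univ.filter (fun q : V × V => q.1 < q.2 ∧ G.Adj q.1 q.2)).card := by
          rw [← hnE]; exact Nat.pos_of_ne_zero hE0
        have hpos : (univ.filter (fun q : V × V => q.1 < q.2 ∧ G.Adj q.1 q.2)).Nonempty :=
          card_pos.mp hpos0
        obtain ⟨q, hq⟩ := hpos
        simp only [mem_filter] at hq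
        exact Fintype.one_lt_card_iff.mpr ⟨q.1, q.2, ne_of_lt hq.2.1⟩
      by_cases hgood : ∀ i : V, ((∀ b, Ha (i, b) = false) ∨ (∀ b, Hb (i, b) = false))
          ∧ ((∀ b, Ha (i, b) = true) ∨ (∀ b, Hb (i, b) = true))
      · -- good case: haplotypes are complementary and constant on pairs
        have hpair : ∀ i : V, (∀ b, Ha (i, b) = Ha (i, false))
            ∧ (∀ b, Hb (i, b) = !Ha (i, false)) := by
          intro i
          obtain ⟨hf0, ht0⟩ := hgood i
          rcases hf0 with ha0 | hb0 <;> rcases ht0 with ha1 | hb1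
          · exfalso
            have h1 := ha0 false
            have h2 := ha1 false
            rw [h1] at h2
            exact Bool.false_ne_true h2
          · refine ⟨fun b => by rw [ha0 b, ha0 false], fun b => by rw [hb1 b, ha0 false]; rfl⟩
          · refine ⟨fun b => by rw [ha1 b, ha1 false], fun b => by rw [hb0 b, ha1 false]; rfl⟩
          · exfalso
            have h1 := hb0 false
            have h2 := hb1 false
            rw [h1] at h2
            exact Bool.false_ne_true h2
        set ψ : V → Bool := fun h => Ha (h, false) with hψ
        have hHa : Ha = fun c : Col V => ψ c.1 := by
          funext c
          exact (hpair c.1).1 c.2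
        have hHb : Hb = fun c : Col V => !ψ c.1 := by
          funext c
          exact (hpair c.1).2 c.2
        have hlb : ∀ e : {q : V × V // q.1 < q.2 ∧ G.Adj q.1 q.2},
            (n - 2) + (if ψ e.1.1 = ψ e.1.2 then 2 else 0)
              ≤ rcost (Hc' (Sum.inr e)) (redM G K (Sum.inr e)) := by
          intro e
          have hij : e.1.1 ≠ e.1.2 := ne_of_lt e.2.1
          have hH : Hc' (Sum.inr e) = (fun c : Col V => ψ c.1)
              ∨ Hc' (Sum.inr e) = (fun c : Col V => !ψ c.1) := by
            rcases hc1 (Sum.inr e) with h | h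
            · left; rw [h, hHa]
            · right; rw [h, hHb]
          exact rcost_rowG_lb ψ e.1.1 e.1.2 hij _ hH
        have hcut : (univ.filter (fun q : V × V =>
            q.1 < q.2 ∧ G.Adj q.1 q.2 ∧ ¬(ψ q.1 = ψ q.2))).card ≤ maxCut G := by
          have heq : univ.filter (fun q : V × V =>
              q.1 < q.2 ∧ G.Adj q.1 q.2 ∧ ¬(ψ q.1 = ψ q.2))
              = univ.filter (fun q : V × V => q.1 < q.2 ∧ G.Adj q.1 q.2
                  ∧ ¬(q.1 ∈ univ.filter (fun h => ψ h = true)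
                      ↔ q.2 ∈ univ.filter (fun h => ψ h = true))) := by
            apply Finset.filter_congr
            intro q _
            have hbb : (¬(ψ q.1 = ψ q.2)) ↔ ¬(ψ q.1 = true ↔ ψ q.2 = true) := by
              cases h1 : ψ q.1 <;> cases h2 : ψ q.2 <;> simp
            simp only [mem_filter, mem_univ, true_and]
            rw [hbb]
          rw [heq]
          exact hle _
        calc nE * (n - 2) + 2 * (nE - maxCut G)
            ≤ nE * (n - 2) + 2 * (nE - (univ.filter (fun q : V × V =>
                q.1 < q.2 ∧ G.Adj q.1 q.2 ∧ ¬(ψ q.1 = ψ q.2))).card) := by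
              have := Nat.sub_le_sub_left hcut nE
              omega
          _ = ∑ e : {q : V × V // q.1 < q.2 ∧ G.Adj q.1 q.2},
                ((n - 2) + (if ψ e.1.1 = ψ e.1.2 then 2 else 0)) := (sum_edge_cut G ψ).symm
          _ ≤ ∑ e : {q : V × V // q.1 < q.2 ∧ G.Adj q.1 q.2},
                rcost (Hc' (Sum.inr e)) (redM G K (Sum.inr e)) :=
              Finset.sum_le_sum (fun e _ => hlb e)
          _ ≤ ∑ r, rcost (Hc' r) (redM G K r) := by
              rw [total_sum (fun r => rcost (Hc' r) (redM G K r))]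
              exact Nat.le_add_left _ _
      · -- bad case: ≥ K flips
        obtain ⟨i, hi⟩ := not_forall.mp hgood
        have hKle : K ≤ ∑ r, rcost (Hc' r) (redM G K r) := by
          have key : ∃ v : V ⊕ V, ∀ a : Fin K,
              1 ≤ rcost (Hc' (Sum.inl (a, v))) (redM G K (Sum.inl (a, v))) := by
            rcases not_and_or.mp hi with hbad | hbad
            · push_neg at hbad
              obtain ⟨⟨ba, hba⟩, ⟨bb, hbb⟩⟩ := hbad
              refine ⟨Sum.inl i, fun a => ?_⟩
              rcases hc1 (Sum.inl (a, Sum.inl i)) with h | h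
              · rw [h]
                exact one_le_rcost_row0 Ha i ba (by simpa using hba)
              · rw [h]
                exact one_le_rcost_row0 Hb i bb (by simpa using hbb)
            · push_neg at hbad
              obtain ⟨⟨ba, hba⟩, ⟨bb, hbb⟩⟩ := hbad
              refine ⟨Sum.inr i, fun a => ?_⟩
              rcases hc1 (Sum.inl (a, Sum.inr i)) with h | h
              · rw [h]
                exact one_le_rcost_row1 Ha i ba (by simpa using hba)
              · rw [h]
                exact one_le_rcost_row1 Hb i bb (by simpa using hbb)
          obtain ⟨v, hv⟩ := key
          calc K = ∑ _a : Fin K, 1 := by simp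
            _ ≤ ∑ a : Fin K, rcost (Hc' (Sum.inl (a, v))) (redM G K (Sum.inl (a, v))) :=
                Finset.sum_le_sum (fun a _ => hv a)
            _ ≤ ∑ a : Fin K, ∑ w : V ⊕ V,
                  rcost (Hc' (Sum.inl (a, w))) (redM G K (Sum.inl (a, w))) :=
                Finset.sum_le_sum (fun a _ =>
                  Finset.single_le_sum (f := fun w =>
                    rcost (Hc' (Sum.inl (a, w))) (redM G K (Sum.inl (a, w))))
                    (fun _ _ => Nat.zero_le _) (mem_univ v))
            _ ≤ ∑ r, rcost (Hc' r) (redM G K r) := by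
                rw [total_sum (fun r => rcost (Hc' r) (redM G K r))]
                exact Nat.le_add_right _ _
        refine le_trans ?_ hKle
        calc nE * (n - 2) + 2 * (nE - maxCut G)
            ≤ nE * (n - 2) + 2 * nE := by
              have := Nat.sub_le nE (maxCut G)
              omega
          _ = nE * ((n - 2) + 2) := by ring
          _ = nE * n := by rw [Nat.sub_add_cancel hn2]
          _ ≤ K := by rw [hK, Nat.mul_assoc, Nat.two_mul]; exact Nat.le_add_right _ _
end
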